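/- arXiv:0707.1256 — 5 statements merged into one kernel-verified Lean document; each statement's English description precedes it below -/
import Mathlib

section
/- Let ε > 0 and let a < b be real numbers with b − a < ε. Let q : ℝ → ℝ be continuous with |q(t)| ≤ ε⁻² for all t ∈ [a,b], and let v : ℝ → ℝ be twice continuously differentiable with v''(t) = q(t)·v(t) for all t ∈ [a,b], v(a) = 0 and v'(a) = 1. Then v'(t) > 0 for all t ∈ (a,b); in particular v(t) > 0 for all t ∈ (a,b]. -/
open Real Set

/-!
Sturm comparison with `sin (k (t - a))`, a solution of `y'' = -k² y` that is positive on
`(a, a + π / k)`, where `k = ε⁻¹`. If `v' > 0` on `[a, c)`, then `v ≥ 0` on `[a, c]` and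
the Wronskian `W = v' sin (k (t - a)) - k v cos (k (t - a))` satisfies
`W' = (q + k²) v sin (k (t - a)) ≥ 0` and `W a = 0`. So `W c ≥ 0`, which forces `v' c > 0` as long
as `cos (k (c - a)) > 0`. Hence the first zero of `v'` cannot come before `a + π / (2k)`, and
`b - a < ε < π / (2k)`.
-/

theorem ContinuousOn.forall_pos_of_forall_Ico {f : ℝ → ℝ} {a b : ℝ}
    (hf : ContinuousOn f (Icc a b))
    (hstep : ∀ c ∈ Icc a b, (∀ t ∈ Ico a c, 0 < f t) → 0 < f c) :
    ∀ t ∈ Icc a b, 0 < f t := by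
  by_contra! ⟨t₀, ht₀, hft₀⟩
  set S := Icc a b ∩ f ⁻¹' Iic 0
  have hSbdd : BddBelow S := ⟨a, fun x hx => hx.1.1⟩
  have hcS : sInf S ∈ S :=
    (hf.preimage_isClosed_of_isClosed isClosed_Icc isClosed_Iic).csInf_mem ⟨t₀, ht₀, hft₀⟩ hSbdd
  have hbelow : ∀ t ∈ Ico a (sInf S), 0 < f t := fun t ht => by
    by_contra! hft
    exact (csInf_le hSbdd ⟨⟨ht.1, ht.2.le.trans hcS.1.2⟩, hft⟩).not_gt ht.2
  exact (hstep _ hcS.1 hbelow).not_ge hcS.2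

theorem hasDerivAt_wronskian_sin {v v' : ℝ → ℝ} {k a t v'' : ℝ}
    (hv : HasDerivAt v (v' t) t) (hv' : HasDerivAt v' v'' t) :
    HasDerivAt (fun s => v' s * sin (k * (s - a)) - k * v s * cos (k * (s - a)))
      ((v'' + k ^ 2 * v t) * sin (k * (t - a))) t := by
  have hθ : HasDerivAt (fun s => k * (s - a)) k t := by
    simpa using ((hasDerivAt_id t).sub_const a).const_mul k
  exact ((hv'.fun_mul hθ.sin).fun_sub ((hv.const_mul k).fun_mul hθ.cos)).congr_deriv (by ring)

section Sturm

variable {k a : ℝ} {q v v' : ℝ → ℝ}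

theorem sturm_deriv_pos_of_pos_on_Ico {c : ℝ} (hk : 0 < k) (hkc : k * (c - a) < π / 2)
    (hac : a < c) (hq : ∀ t ∈ Icc a c, -k ^ 2 ≤ q t)
    (hv : ∀ t ∈ Icc a c, HasDerivAt v (v' t) t)
    (hv' : ∀ t ∈ Icc a c, HasDerivAt v' (q t * v t) t)
    (hva : v a = 0) (hpos : ∀ t ∈ Ico a c, 0 < v' t) : 0 < v' c := by
  have hvc : ContinuousOn v (Icc a c) := fun t ht => (hv t ht).continuousAt.continuousWithinAt
  have hinterior : interior (Icc a c) ⊆ Ico a c := by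
    rw [interior_Icc]; exact Ioo_subset_Ico_self
  have hvmono : StrictMonoOn v (Icc a c) :=
    strictMonoOn_of_hasDerivWithinAt_pos (convex_Icc a c) hvc
      (fun t ht => (hv t (interior_subset ht)).hasDerivWithinAt) fun t ht => hpos t (hinterior ht)
  have hv_nonneg : ∀ t ∈ Icc a c, 0 ≤ v t := fun t ht =>
    hva ▸ hvmono.monotoneOn (left_mem_Icc.2 hac.le) ht ht.1
  have hv_c : 0 < v c := hva ▸ hvmono (left_mem_Icc.2 hac.le) (right_mem_Icc.2 hac.le) hac
  have hsin_nonneg : ∀ t ∈ Icc a c, 0 ≤ sin (k * (t - a)) := fun t ht =>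
    sin_nonneg_of_nonneg_of_le_pi (by nlinarith [ht.1])
      (by nlinarith [ht.2, pi_pos, mul_le_mul_of_nonneg_left ht.2 hk.le])
  have hsin_c : 0 < sin (k * (c - a)) :=
    sin_pos_of_pos_of_lt_pi (by nlinarith) (by linarith [pi_pos])
  have hcos_c : 0 < cos (k * (c - a)) := cos_pos_of_mem_Ioo ⟨by nlinarith [pi_pos], hkc⟩
  set W := fun s => v' s * sin (k * (s - a)) - k * v s * cos (k * (s - a))
  have hW : ∀ t ∈ Icc a c, HasDerivAt W ((q t + k ^ 2) * v t * sin (k * (t - a))) t :=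
    fun t ht => by simpa only [add_mul] using hasDerivAt_wronskian_sin (hv t ht) (hv' t ht)
  have hWmono : MonotoneOn W (Icc a c) :=
    monotoneOn_of_hasDerivWithinAt_nonneg (convex_Icc a c)
      (fun t ht => (hW t ht).continuousAt.continuousWithinAt)
      (fun t ht => (hW t (interior_subset ht)).hasDerivWithinAt) fun t ht => by
        have ht' := interior_subset ht
        exact mul_nonneg (mul_nonneg (by linarith [hq t ht']) (hv_nonneg t ht'))
          (hsin_nonneg t ht')
  have hWc : 0 ≤ W c := by
    simpa [W, hva] using hWmono (left_mem_Icc.2 hac.le) (right_mem_Icc.2 hac.le) hac.le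
  have : 0 < v' c * sin (k * (c - a)) := by
    simp only [W] at hWc
    nlinarith [mul_pos (mul_pos hk hv_c) hcos_c]
  exact (mul_pos_iff_of_pos_right hsin_c).1 this

theorem sturm_deriv_pos {b : ℝ} (hk : 0 < k) (hkb : k * (b - a) < π / 2)
    (hq : ∀ t ∈ Icc a b, -k ^ 2 ≤ q t)
    (hv : ∀ t ∈ Icc a b, HasDerivAt v (v' t) t)
    (hv' : ∀ t ∈ Icc a b, HasDerivAt v' (q t * v t) t)
    (hva : v a = 0) (hv'a : 0 < v' a) : ∀ t ∈ Icc a b, 0 < v' t := by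
  refine ContinuousOn.forall_pos_of_forall_Ico
    (fun t ht => (hv' t ht).continuousAt.continuousWithinAt) fun c hc hpos => ?_
  rcases hc.1.eq_or_lt with rfl | hac
  · exact hv'a
  have hsub : Icc a c ⊆ Icc a b := Icc_subset_Icc_right hc.2
  have hkc : k * (c - a) < π / 2 :=
    (mul_le_mul_of_nonneg_left (by linarith [hc.2]) hk.le).trans_lt hkb
  exact sturm_deriv_pos_of_pos_on_Ico hk hkc hac (fun t ht => hq t (hsub ht))
    (fun t ht => hv t (hsub ht)) (fun t ht => hv' t (hsub ht)) hva hpos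

end Sturm

theorem stmt_0_general (ε a b : ℝ) (hlen : b - a < ε)
    (q v : ℝ → ℝ)
    (hqb : ∀ t ∈ Icc a b, |q t| ≤ (ε ^ 2)⁻¹)
    (hv : ContDiff ℝ 2 v)
    (hode : ∀ t ∈ Icc a b, deriv (deriv v) t = q t * v t)
    (hva : v a = 0) (hv'a : deriv v a = 1) :
    (∀ t ∈ Ioo a b, 0 < deriv v t) ∧ (∀ t ∈ Ioc a b, 0 < v t) := by
  rcases le_or_gt b a with hba | hab
  · simp [Ioo_eq_empty hba.not_gt, Ioc_eq_empty hba.not_gt]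
  have hε : 0 < ε := (sub_pos.2 hab).trans hlen
  have hv' : ContDiff ℝ 1 (deriv v) := hv.deriv'
  have hderiv : ∀ t ∈ Icc a b, 0 < deriv v t :=
    sturm_deriv_pos (k := ε⁻¹) (inv_pos.2 hε)
      (((inv_mul_lt_one₀ hε).2 hlen).trans_le one_le_pi_div_two)
      (fun t ht => by rw [inv_pow]; linarith [neg_abs_le (q t), hqb t ht])
      (fun t _ => (hv.differentiable two_ne_zero t).hasDerivAt)
      (fun t ht => hode t ht ▸ (hv'.differentiable one_ne_zero t).hasDerivAt) hva
      (hv'a ▸ one_pos)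
  have hmono : StrictMonoOn v (Icc a b) :=
    strictMonoOn_of_deriv_pos (convex_Icc a b) hv.continuous.continuousOn
      fun t ht => hderiv t (interior_subset ht)
  exact ⟨fun t ht => hderiv t (Ioo_subset_Icc_self ht),
    fun t ht => hva ▸ hmono (left_mem_Icc.2 hab.le) (Ioc_subset_Icc_self ht) ht.1⟩

/-- Core estimate of Lemma 2.2(a): if `|q| ≤ ε⁻²` on `[a,b]` with
`b - a < ε`, and `v'' = q·v`, `v(a) = 0`, `v'(a) = 1`, then `v' > 0` on `(a,b)` and
`v > 0` on `(a,b]`. -/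
theorem stmt_0 (ε a b : ℝ) (hε : 0 < ε) (hab : a < b) (hlen : b - a < ε)
    (q v : ℝ → ℝ) (hq : Continuous q)
    (hqb : ∀ t ∈ Icc a b, |q t| ≤ (ε ^ 2)⁻¹)
    (hv : ContDiff ℝ 2 v)
    (hode : ∀ t ∈ Icc a b, deriv (deriv v) t = q t * v t)
    (hva : v a = 0) (hv'a : deriv v a = 1) :
    (∀ t ∈ Ioo a b, 0 < deriv v t) ∧ (∀ t ∈ Ioc a b, 0 < v t) :=
  stmt_0_general ε a b hlen q v hqb hv hode hva hv'a
end

section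
/- Let q : ℝ → ℝ be continuous and let ε > 0 satisfy |q(t)| ≤ ε⁻² for all t ∈ [0,2π]. Then for all t⁻, t⁺ with 0 ≤ t⁻ < t⁺ ≤ 2π and t⁺ − t⁻ < ε, one has θ_q(t⁻) < θ_q(t⁺) < θ_q(t⁻) + π. -/
open Real Set Filter Topology

/-! For a solution pair `(v₁, v₂)` of `v'' = q v` written as `r (cos θ, sin θ)`, the combination
`Z = cos α · v₂ - sin α · v₁ = r sin (θ - α)` is again a solution. For `α = θ x` it vanishes at `x`
with `r(x) Z'(x) = v₁ v₂' - v₂ v₁' = 1`, the Wronskian, so `θ` crosses each of its values upwards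
and is strictly increasing. If `θ` gained `π` on `[t⁻, t⁺]`, then `Z` for `α = θ t⁻` would vanish
twice at distance `< ε` without vanishing in between; at a maximum `τ` of `|Z|` between the zeros,
two mean value estimates give `|Z τ| ≤ ε⁻² |Z τ| (τ - t⁻)² < |Z τ|`. -/

theorem strictMonoOn_Icc_of_eventually_lt_nhdsGT {α β : Type*}
    [ConditionallyCompleteLinearOrder α] [TopologicalSpace α] [OrderTopology α] [DenselyOrdered α]
    [LinearOrder β] [TopologicalSpace β] [OrderClosedTopology β] {f : α → β} {a b : α}
    (hf : ContinuousOn f (Icc a b)) (hlt : ∀ x ∈ Ico a b, ∀ᶠ y in 𝓝[>] x, f x < f y) :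
    StrictMonoOn f (Icc a b) := by
  have hmono : ∀ x ∈ Icc a b, Icc x b ⊆ {y | f x ≤ f y} := by
    intro x hx
    have hclosed : IsClosed ({y | f x ≤ f y} ∩ Icc x b) := by
      rw [inter_comm]
      exact (hf.mono (Icc_subset_Icc_left hx.1)).preimage_isClosed_of_isClosed isClosed_Icc
        isClosed_Ici
    refine hclosed.Icc_subset_of_forall_mem_nhdsWithin le_rfl fun y ⟨hxy, hy⟩ => ?_
    filter_upwards [hlt y ⟨hx.1.trans hy.1, hy.2⟩] with z hz using hxy.trans hz.le
  intro x hx y hy hxy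
  have := nhdsGT_neBot_of_exists_gt ⟨y, hxy⟩
  obtain ⟨z, hxz, hzy⟩ := ((hlt x ⟨hx.1, hxy.trans_le hy.2⟩).and (Ioo_mem_nhdsGT hxy)).exists
  exact hxz.trans_le (hmono z ⟨hx.1.trans hzy.1.le, hzy.2.le.trans hy.2⟩ ⟨hzy.2.le, hy.2⟩)

theorem HasDerivAt.eventually_pos_nhdsGT {f : ℝ → ℝ} {f' x : ℝ} (hf : HasDerivAt f f' x)
    (hx : f x = 0) (hf' : 0 < f') : ∀ᶠ y in 𝓝[>] x, 0 < f y := by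
  have hslope := (hasDerivAt_iff_tendsto_slope.1 hf).eventually (eventually_gt_nhds hf')
  filter_upwards [nhdsGT_le_nhdsNE x hslope, self_mem_nhdsWithin] with y hy hxy
  exact pos_of_slope_pos hxy hy hx

theorem abs_le_mul_sq_of_hasDerivAt {w w' w'' : ℝ → ℝ} {a b K : ℝ} (hab : a ≤ b)
    (hw : ∀ t ∈ Icc a b, HasDerivAt w (w' t) t) (hw' : ∀ t ∈ Icc a b, HasDerivAt w' (w'' t) t)
    (hK : ∀ t ∈ Icc a b, |w'' t| ≤ K) (ha : w a = 0) (hb : w' b = 0) :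
    |w b| ≤ K * (b - a) ^ 2 := by
  have hw'_le : ∀ t ∈ Icc a b, ‖w' t‖ ≤ K * (b - a) := by
    intro t ht
    have h := (convex_Icc a b).norm_image_sub_le_of_norm_hasDerivWithin_le
      (fun s hs => (hw' s hs).hasDerivWithinAt) hK ht (right_mem_Icc.2 hab)
    rw [hb, zero_sub, norm_neg, Real.norm_of_nonneg (sub_nonneg.2 ht.2)] at h
    exact h.trans (mul_le_mul_of_nonneg_left (by linarith [ht.1]) ((abs_nonneg _).trans (hK t ht)))
  have h := (convex_Icc a b).norm_image_sub_le_of_norm_hasDerivWithin_le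
    (fun s hs => (hw s hs).hasDerivWithinAt) hw'_le (left_mem_Icc.2 hab) (right_mem_Icc.2 hab)
  rw [ha, sub_zero, Real.norm_of_nonneg (sub_nonneg.2 hab)] at h
  simpa [sq, mul_assoc] using h

theorem eqOn_zero_of_zero_of_zero_of_sub_lt {w w' p : ℝ → ℝ} {a b ε : ℝ}
    (hw : ∀ t ∈ Icc a b, HasDerivAt w (w' t) t) (hw' : ∀ t ∈ Icc a b, HasDerivAt w' (p t * w t) t)
    (hp : ∀ t ∈ Icc a b, |p t| ≤ (ε ^ 2)⁻¹) (hba : b - a < ε) (ha : w a = 0) (hb : w b = 0) :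
    EqOn w 0 (Icc a b) := by
  intro t₀ ht₀
  by_contra hne
  have hab : a ≤ b := ht₀.1.trans ht₀.2
  have hcont : ContinuousOn (fun t => w t ^ 2) (Icc a b) :=
    fun t ht => ((hw t ht).continuousAt.pow 2).continuousWithinAt
  obtain ⟨τ, hτ, hmax⟩ := isCompact_Icc.exists_isMaxOn ⟨a, left_mem_Icc.2 hab⟩ hcont
  have hwτ : w τ ≠ 0 := fun h0 => hne (by simpa [h0] using hmax ht₀)
  have hτ : τ ∈ Ioo a b :=
    ⟨hτ.1.lt_of_ne (by rintro rfl; exact hwτ ha), hτ.2.lt_of_ne (by rintro rfl; exact hwτ hb)⟩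
  have hw'τ : w' τ = 0 := by
    have h := (hmax.isLocalMax (Icc_mem_nhds hτ.1 hτ.2)).hasDerivAt_eq_zero
      ((hw τ (Ioo_subset_Icc_self hτ)).pow 2)
    simpa [hwτ] using h
  have hsub : Icc a τ ⊆ Icc a b := Icc_subset_Icc_right hτ.2.le
  have hbound : ∀ t ∈ Icc a τ, |p t * w t| ≤ (ε ^ 2)⁻¹ * |w τ| := fun t ht => by
    rw [abs_mul]
    exact mul_le_mul (hp t (hsub ht)) (sq_le_sq.1 (hmax (hsub ht))) (abs_nonneg _)
      ((abs_nonneg _).trans (hp t (hsub ht)))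
  have key := abs_le_mul_sq_of_hasDerivAt hτ.1.le (fun t ht => hw t (hsub ht))
    (fun t ht => hw' t (hsub ht)) hbound ha hw'τ
  have hε : 0 < ε := by linarith [hτ.1, hτ.2]
  have hlen : (τ - a) ^ 2 < ε ^ 2 := by nlinarith [hτ.1, hτ.2]
  refine lt_irrefl _ (key.trans_lt ?_)
  calc (ε ^ 2)⁻¹ * |w τ| * (τ - a) ^ 2 < (ε ^ 2)⁻¹ * |w τ| * ε ^ 2 := by gcongr
    _ = |w τ| := by field_simp

theorem wronskian_eq_wronskian_zero {u u' v v' p : ℝ → ℝ}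
    (hu : ∀ t, HasDerivAt u (u' t) t) (hu' : ∀ t, HasDerivAt u' (p t * u t) t)
    (hv : ∀ t, HasDerivAt v (v' t) t) (hv' : ∀ t, HasDerivAt v' (p t * v t) t) (t : ℝ) :
    u t * v' t - v t * u' t = u 0 * v' 0 - v 0 * u' 0 := by
  have hderiv : ∀ s, HasDerivAt (fun s => u s * v' s - v s * u' s) 0 s := fun s =>
    (((hu s).mul (hv' s)).sub ((hv s).mul (hu' s))).congr_deriv (by ring)
  exact is_const_of_deriv_eq_zero (fun s => (hderiv s).differentiableAt)
    (fun s => (hderiv s).deriv) t 0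

def IsArgLiftOn (v₁ v₂ θ : ℝ → ℝ) (s : Set ℝ) : Prop :=
  ContinuousOn θ s ∧ ∀ t ∈ s,
    v₁ t = √(v₁ t ^ 2 + v₂ t ^ 2) * cos (θ t) ∧ v₂ t = √(v₁ t ^ 2 + v₂ t ^ 2) * sin (θ t)

namespace IsArgLiftOn

variable {v₁ v₂ θ : ℝ → ℝ}

theorem cos_mul_sub_sin_mul {s : Set ℝ} (h : IsArgLiftOn v₁ v₂ θ s) {t : ℝ} (ht : t ∈ s)
    (α : ℝ) : cos α * v₂ t - sin α * v₁ t = √(v₁ t ^ 2 + v₂ t ^ 2) * sin (θ t - α) := by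
  obtain ⟨h₁, h₂⟩ := h.2 t ht
  set r := √(v₁ t ^ 2 + v₂ t ^ 2)
  rw [sin_sub, h₁, h₂]
  ring

theorem eventually_pos_nhdsGT {s : Set ℝ} (h : IsArgLiftOn v₁ v₂ θ s) {x v₁' v₂' : ℝ}
    (hx : x ∈ s) (hv₁ : HasDerivAt v₁ v₁' x) (hv₂ : HasDerivAt v₂ v₂' x)
    (hW : 0 < v₁ x * v₂' - v₂ x * v₁') :
    ∀ᶠ t in 𝓝[>] x, 0 < cos (θ x) * v₂ t - sin (θ x) * v₁ t := by
  have hzero : cos (θ x) * v₂ x - sin (θ x) * v₁ x = 0 := by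
    rw [h.cos_mul_sub_sin_mul hx, sub_self, sin_zero, mul_zero]
  refine ((hv₂.const_mul _).sub (hv₁.const_mul _)).eventually_pos_nhdsGT hzero ?_
  obtain ⟨h₁, h₂⟩ := h.2 x hx
  set r := √(v₁ x ^ 2 + v₂ x ^ 2)
  rw [h₁, h₂] at hW
  exact pos_of_mul_pos_right (a := r) (by linear_combination hW) (sqrt_nonneg _)

theorem eventually_lt_nhdsGT {s : Set ℝ} (h : IsArgLiftOn v₁ v₂ θ s) {x v₁' v₂' : ℝ}
    (hx : x ∈ s) (hs : s ∈ 𝓝[>] x) (hv₁ : HasDerivAt v₁ v₁' x) (hv₂ : HasDerivAt v₂ v₂' x)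
    (hW : 0 < v₁ x * v₂' - v₂ x * v₁') : ∀ᶠ t in 𝓝[>] x, θ x < θ t := by
  have hnear : ∀ᶠ t in 𝓝[>] x, θ t ∈ Ioo (θ x - π) (θ x + π) :=
    nhdsWithin_le_of_mem hs <| h.1 x hx <|
      Ioo_mem_nhds (by linarith [pi_pos]) (by linarith [pi_pos])
  filter_upwards [h.eventually_pos_nhdsGT hx hv₁ hv₂ hW, hnear, hs] with t hpos hθt ht
  rw [h.cos_mul_sub_sin_mul ht] at hpos
  by_contra! hle
  exact (pos_of_mul_pos_right hpos (sqrt_nonneg _)).not_ge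
    (sin_nonpos_of_nonpos_of_neg_pi_le (by linarith) (by linarith [hθt.1]))

variable {v₁' v₂' : ℝ → ℝ} {a b : ℝ}

theorem strictMonoOn (h : IsArgLiftOn v₁ v₂ θ (Icc a b))
    (hv₁ : ∀ t ∈ Icc a b, HasDerivAt v₁ (v₁' t) t) (hv₂ : ∀ t ∈ Icc a b, HasDerivAt v₂ (v₂' t) t)
    (hW : ∀ t ∈ Icc a b, 0 < v₁ t * v₂' t - v₂ t * v₁' t) : StrictMonoOn θ (Icc a b) :=
  strictMonoOn_Icc_of_eventually_lt_nhdsGT h.1 fun x hx =>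
    have hx' := Ico_subset_Icc_self hx
    h.eventually_lt_nhdsGT hx' (Icc_mem_nhdsGT_of_mem hx) (hv₁ x hx') (hv₂ x hx') (hW x hx')

theorem lt_add_pi {p : ℝ → ℝ} {ε : ℝ} (h : IsArgLiftOn v₁ v₂ θ (Icc a b)) (hab : a ≤ b)
    (hv₁ : ∀ t ∈ Icc a b, HasDerivAt v₁ (v₁' t) t)
    (hv₁' : ∀ t ∈ Icc a b, HasDerivAt v₁' (p t * v₁ t) t)
    (hv₂ : ∀ t ∈ Icc a b, HasDerivAt v₂ (v₂' t) t)
    (hv₂' : ∀ t ∈ Icc a b, HasDerivAt v₂' (p t * v₂ t) t)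
    (hp : ∀ t ∈ Icc a b, |p t| ≤ (ε ^ 2)⁻¹) (hba : b - a < ε)
    (hW : 0 < v₁ a * v₂' a - v₂ a * v₁' a) : θ b < θ a + π := by
  by_contra! hge
  have ha : a ∈ Icc a b := left_mem_Icc.2 hab
  obtain ⟨c, hc, hθc⟩ := intermediate_value_Icc hab h.1 ⟨by linarith [pi_pos], hge⟩
  have hac : a < c := hc.1.lt_of_ne (by rintro rfl; linarith [pi_pos])
  have hsub : Icc a c ⊆ Icc a b := Icc_subset_Icc_right hc.2
  have hzero_a : cos (θ a) * v₂ a - sin (θ a) * v₁ a = 0 := by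
    rw [h.cos_mul_sub_sin_mul ha, sub_self, sin_zero, mul_zero]
  have hzero_c : cos (θ a) * v₂ c - sin (θ a) * v₁ c = 0 := by
    rw [h.cos_mul_sub_sin_mul hc, hθc, add_sub_cancel_left, sin_pi, mul_zero]
  obtain ⟨t, hpos, ht⟩ :=
    ((h.eventually_pos_nhdsGT ha (hv₁ a ha) (hv₂ a ha) hW).and (Ioo_mem_nhdsGT hac)).exists
  refine hpos.ne' (eqOn_zero_of_zero_of_zero_of_sub_lt
    (w := fun t => cos (θ a) * v₂ t - sin (θ a) * v₁ t)
    (fun t ht => ((hv₂ t (hsub ht)).const_mul _).sub ((hv₁ t (hsub ht)).const_mul _))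
    (fun t ht => (((hv₂' t (hsub ht)).const_mul _).sub
      ((hv₁' t (hsub ht)).const_mul _)).congr_deriv (by ring))
    (fun t ht => hp t (hsub ht)) (by linarith [hc.2]) hzero_a hzero_c (Ioo_subset_Icc_self ht))

end IsArgLiftOn

theorem hasDerivAt_fundamental_zero {Φ : ℝ → Matrix (Fin 2) (Fin 2) ℝ} {q : ℝ → ℝ}
    (hΦ : ∀ t : ℝ, ∀ i j, HasDerivAt (fun s => Φ s i j) ((!![0, 1; q t, 0] * Φ t) i j) t)
    (t : ℝ) (j : Fin 2) : HasDerivAt (fun s => Φ s 0 j) (Φ t 1 j) t := by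
  simpa [Matrix.mul_apply, Fin.sum_univ_two] using hΦ t 0 j

theorem hasDerivAt_fundamental_one {Φ : ℝ → Matrix (Fin 2) (Fin 2) ℝ} {q : ℝ → ℝ}
    (hΦ : ∀ t : ℝ, ∀ i j, HasDerivAt (fun s => Φ s i j) ((!![0, 1; q t, 0] * Φ t) i j) t)
    (t : ℝ) (j : Fin 2) : HasDerivAt (fun s => Φ s 1 j) (q t * Φ t 0 j) t := by
  simpa [Matrix.mul_apply, Fin.sum_univ_two] using hΦ t 1 j

theorem stmt_1_general (ε : ℝ) (q : ℝ → ℝ)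
    (hqb : ∀ t ∈ Icc (0:ℝ) (2 * π), |q t| ≤ (ε ^ 2)⁻¹)
    -- `Φ` is the fundamental matrix of the potential `q`:
    (Φ : ℝ → Matrix (Fin 2) (Fin 2) ℝ)
    (hΦ0 : Φ 0 = 1)
    (hΦ : ∀ t : ℝ, ∀ i j, HasDerivAt (fun s => Φ s i j) ((!![0, 1; q t, 0] * Φ t) i j) t)
    -- `θ` is the continuous argument lift of the curve `t ↦ (v₁(t), v₂(t))`,
    -- the first row of `Φ`:
    (θ : ℝ → ℝ) (hθc : ContinuousOn θ (Icc 0 (2 * π)))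
    (hpolar : ∀ t ∈ Icc (0:ℝ) (2 * π),
      Φ t 0 0 = Real.sqrt ((Φ t 0 0) ^ 2 + (Φ t 0 1) ^ 2) * Real.cos (θ t) ∧
      Φ t 0 1 = Real.sqrt ((Φ t 0 0) ^ 2 + (Φ t 0 1) ^ 2) * Real.sin (θ t)) :
    ∀ tm tp : ℝ, 0 ≤ tm → tm < tp → tp ≤ 2 * π → tp - tm < ε →
      θ tm < θ tp ∧ θ tp < θ tm + π := by
  intro tm tp h0m hmp hp2 hlen
  have hsub : Icc tm tp ⊆ Icc 0 (2 * π) := Icc_subset_Icc h0m hp2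
  have hd₀ := hasDerivAt_fundamental_zero hΦ
  have hd₁ := hasDerivAt_fundamental_one hΦ
  have hW (t : ℝ) : 0 < Φ t 0 0 * Φ t 1 1 - Φ t 0 1 * Φ t 1 0 := by
    rw [wronskian_eq_wronskian_zero (hd₀ · 0) (hd₁ · 0) (hd₀ · 1) (hd₁ · 1) t, hΦ0]
    simp
  have hlift : IsArgLiftOn (fun t => Φ t 0 0) (fun t => Φ t 0 1) θ (Icc tm tp) :=
    ⟨hθc.mono hsub, fun t ht => hpolar t (hsub ht)⟩
  refine ⟨hlift.strictMonoOn (fun t _ => hd₀ t 0) (fun t _ => hd₀ t 1) (fun t _ => hW t)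
    (left_mem_Icc.2 hmp.le) (right_mem_Icc.2 hmp.le) hmp, ?_⟩
  exact hlift.lt_add_pi hmp.le (fun t _ => hd₀ t 0) (fun t _ => hd₁ t 0) (fun t _ => hd₀ t 1)
    (fun t _ => hd₁ t 1) (fun t ht => hqb t (hsub ht)) hlen (hW tm)

/-- Lemma 2.2(a). If `|q| ≤ ε⁻²` on `[0,2π]` then the argument lift
`θ_q` of the first row of the fundamental matrix advances by less than `π` on any
subinterval of length less than `ε`, and it is strictly increasing there. -/
theorem stmt_1 (ε : ℝ) (hε : 0 < ε) (q : ℝ → ℝ) (hq : Continuous q)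
    (hqb : ∀ t ∈ Icc (0:ℝ) (2 * π), |q t| ≤ (ε ^ 2)⁻¹)
    -- `Φ` is the fundamental matrix of the potential `q`:
    (Φ : ℝ → Matrix (Fin 2) (Fin 2) ℝ)
    (hΦ0 : Φ 0 = 1)
    (hΦ : ∀ t : ℝ, ∀ i j, HasDerivAt (fun s => Φ s i j) ((!![0, 1; q t, 0] * Φ t) i j) t)
    -- `θ` is the continuous argument lift of the curve `t ↦ (v₁(t), v₂(t))`,
    -- the first row of `Φ`:
    (θ : ℝ → ℝ) (hθc : ContinuousOn θ (Icc 0 (2 * π))) (hθ0 : θ 0 = 0)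
    (hpolar : ∀ t ∈ Icc (0:ℝ) (2 * π),
      Φ t 0 0 = Real.sqrt ((Φ t 0 0) ^ 2 + (Φ t 0 1) ^ 2) * Real.cos (θ t) ∧
      Φ t 0 1 = Real.sqrt ((Φ t 0 0) ^ 2 + (Φ t 0 1) ^ 2) * Real.sin (θ t)) :
    ∀ tm tp : ℝ, 0 ≤ tm → tm < tp → tp ≤ 2 * π → tp - tm < ε →
      θ tm < θ tp ∧ θ tp < θ tm + π :=
  stmt_1_general ε q hqb Φ hΦ0 hΦ θ hθc hpolar
end

section
/- Let q : ℝ → ℝ be continuous and let 0 ≤ t⁻ < t⁺ ≤ 2π satisfy θ_q(t⁺) < θ_q(t⁻) + π. Let ℓ₁, ℓ₂, ℓ₃ be bumps whose supports are pairwise disjoint closed subintervals of [t⁻, t⁺]. Then the three matrices Mᵢ = ∫₀^{2π} ℓᵢ(t)·Φ_q(t)⁻¹·N₀·Φ_q(t) dt, i = 1,2,3, are linearly independent in M₂(ℝ). -/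
/-!
Since `det Φ = 1`, `Φ⁻¹ N₀ Φ = [[-v₁v₂, -v₂²], [v₁², v₁v₂]]` for the first row `v = (v₁, v₂)`,
so `Mᵢ` is determined by `mᵢ = ∫ ℓᵢ (v₁², v₁v₂, v₂²)`. If the `mᵢ` were dependent, a nonzero
binary quadratic form `Q` would satisfy `∫ ℓᵢ Q(v) = 0` for each `i`, so `Q(v)` would vanish at a
point `tᵢ` of each support. The Wronskian identity `v₁v₂' - v₂v₁' = 1` makes the argument of `v`
strictly increasing, with derivative `1 / |v|²`; together with `θ(t⁺) < θ(t⁻) + π` this makes the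
three vectors `v(tᵢ)` pairwise non-proportional. A binary quadratic form vanishing on three such
vectors is zero, as the Vandermonde-type determinant `det (vᵢ₁², vᵢ₁vᵢ₂, vᵢ₂²)ᵢ` is the product
of the pairwise cross products.
-/

open Real Set Matrix

/-- A bump: a smooth nonnegative function, not identically zero, whose support is a
closed subinterval of `I`. -/
def IsBump (ℓ : ℝ → ℝ) (I : Set ℝ) : Prop :=
  ContDiff ℝ (⊤ : ℕ∞) ℓ ∧ (∀ x, 0 ≤ ℓ x) ∧ ℓ ≠ 0 ∧
    ∃ a b : ℝ, a ≤ b ∧ Icc a b ⊆ I ∧ tsupport ℓ = Icc a b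

/-- The matrix `N₀ = [[0,0],[1,0]]`. -/
def N0 : Matrix (Fin 2) (Fin 2) ℝ := !![0, 0; 1, 0]

/-- The matrix `∫₀^{2π} w(t)·Φ(t)⁻¹·N₀·Φ(t) dt`, computed entrywise. -/
noncomputable def monInt (w : ℝ → ℝ) (Φ : ℝ → Matrix (Fin 2) (Fin 2) ℝ) :
    Matrix (Fin 2) (Fin 2) ℝ :=
  Matrix.of fun i j : Fin 2 =>
    ∫ t in (0:ℝ)..(2 * Real.pi), w t * (((Φ t)⁻¹ * N0 * Φ t) i j)

open MeasureTheory

theorem IsPreconnected.forall_pos_or_forall_neg {X : Type*} [TopologicalSpace X] {s : Set X}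
    (hs : IsPreconnected s) {f : X → ℝ} (hf : ContinuousOn f s) (hne : ∀ x ∈ s, f x ≠ 0) :
    (∀ x ∈ s, 0 < f x) ∨ ∀ x ∈ s, f x < 0 := by
  by_contra h
  push Not at h
  obtain ⟨⟨x, hx, hfx⟩, y, hy, hfy⟩ := h
  obtain ⟨z, hz, hfz⟩ := hs.intermediate_value hx hy hf ⟨hfx, hfy⟩
  exact hne z hz hfz

theorem IsPreconnected.eq_zero_of_sin_eq_zero {X : Type*} [TopologicalSpace X] {s : Set X}
    (hs : IsPreconnected s) {f : X → ℝ} (hf : ContinuousOn f s)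
    (hsin : ∀ x ∈ s, sin (f x) = 0) {x₀ : X} (hx₀ : x₀ ∈ s) (h0 : f x₀ = 0) {x : X}
    (hx : x ∈ s) : f x = 0 := by
  by_contra hne
  -- a zero of `sin` other than `0` lies beyond `±π`, so `f` would pass through `±π/2`
  rcases lt_or_gt_of_ne hne with hneg | hpos
  · have hle : f x ≤ -π := by
      by_contra! h
      exact hne ((sin_eq_zero_iff_of_lt_of_lt h (by linarith [pi_pos])).1 (hsin x hx))
    obtain ⟨z, hz, hfz⟩ := hs.intermediate_value hx hx₀ hf
      (⟨by linarith [pi_pos], by linarith [pi_pos]⟩ : -(π / 2) ∈ Icc (f x) (f x₀))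
    simpa [hfz] using hsin z hz
  · have hle : π ≤ f x := by
      by_contra! h
      exact hne ((sin_eq_zero_iff_of_lt_of_lt (by linarith [pi_pos]) h).1 (hsin x hx))
    obtain ⟨z, hz, hfz⟩ := hs.intermediate_value hx₀ hx hf
      (⟨by linarith [pi_pos], by linarith [pi_pos]⟩ : π / 2 ∈ Icc (f x₀) (f x))
    simpa [hfz] using hsin z hz

theorem intervalIntegral_mul_pos_of_pos_on_tsupport {ℓ f : ℝ → ℝ} {a b : ℝ}
    (hℓ : Continuous ℓ) (hℓ0 : 0 ≤ ℓ) (hℓne : ℓ ≠ 0) (hℓab : tsupport ℓ ⊆ Icc a b)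
    (hf : Continuous f) (hpos : ∀ x ∈ tsupport ℓ, 0 < f x) :
    0 < ∫ x in a..b, ℓ x * f x := by
  obtain ⟨x, hx⟩ := Function.ne_iff.1 hℓne
  have hab : a ≤ b := nonempty_Icc.1 ⟨x, hℓab (subset_tsupport ℓ hx)⟩
  have hnonneg : 0 ≤ fun x => ℓ x * f x := fun y => by
    by_cases hy : ℓ y = 0
    · simp [hy]
    · exact mul_nonneg (hℓ0 y) (hpos y (subset_tsupport ℓ hy)).le
  have hcomp : HasCompactSupport ℓ := isCompact_Icc.of_isClosed_subset (isClosed_tsupport ℓ) hℓab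
  have hzero : ∀ y ∉ Icc a b, ℓ y * f y = 0 := fun y hy => by
    rw [image_eq_zero_of_notMem_tsupport (fun h => hy (hℓab h)), zero_mul]
  rw [intervalIntegral.integral_of_le hab, ← integral_Icc_eq_integral_Ioc,
    setIntegral_eq_integral_of_forall_compl_eq_zero hzero]
  exact (hℓ.mul hf).integral_pos_of_hasCompactSupport_nonneg_nonzero hcomp.mul_right hnonneg
    (mul_ne_zero hx (hpos x (subset_tsupport ℓ hx)).ne')

theorem exists_mem_tsupport_eq_zero_of_intervalIntegral_mul_eq_zero {ℓ f : ℝ → ℝ} {a b : ℝ}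
    (hℓ : Continuous ℓ) (hℓ0 : 0 ≤ ℓ) (hℓne : ℓ ≠ 0) (hℓab : tsupport ℓ ⊆ Icc a b)
    (hℓconn : IsPreconnected (tsupport ℓ)) (hf : Continuous f)
    (h : ∫ x in a..b, ℓ x * f x = 0) : ∃ t ∈ tsupport ℓ, f t = 0 := by
  by_contra! hne
  rcases hℓconn.forall_pos_or_forall_neg hf.continuousOn hne with hpos | hneg
  · exact (intervalIntegral_mul_pos_of_pos_on_tsupport hℓ hℓ0 hℓne hℓab hf hpos).ne' h
  · have := intervalIntegral_mul_pos_of_pos_on_tsupport hℓ hℓ0 hℓne hℓab hf.neg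
      fun x hx => neg_pos.2 (hneg x hx)
    simp only [Pi.neg_apply, mul_neg, intervalIntegral.integral_neg, h, neg_zero] at this
    exact this.false

def veronese {R : Type*} [CommRing R] (x y : R) : Fin 3 → R := ![x ^ 2, x * y, y ^ 2]

theorem det_veronese {R : Type*} [CommRing R] (x y : Fin 3 → R) :
    (Matrix.of fun i => veronese (x i) (y i)).det =
      (x 0 * y 1 - y 0 * x 1) * (x 0 * y 2 - y 0 * x 2) * (x 1 * y 2 - y 1 * x 2) := by
  rw [det_fin_three]
  simp only [veronese, of_apply, cons_val_zero, cons_val_one, cons_val]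
  ring

theorem eq_zero_of_forall_veronese_dotProduct_eq_zero {R : Type*} [CommRing R] [IsDomain R]
    {x y : Fin 3 → R} (h : ∀ i j, i ≠ j → x i * y j - y i * x j ≠ 0) {S : Fin 3 → R}
    (hS : ∀ i, veronese (x i) (y i) ⬝ᵥ S = 0) : S = 0 := by
  refine eq_zero_of_mulVec_eq_zero (M := .of fun i => veronese (x i) (y i)) ?_ (funext hS)
  rw [det_veronese]
  exact mul_ne_zero (mul_ne_zero (h 0 1 (by decide)) (h 0 2 (by decide))) (h 1 2 (by decide))

theorem linearIndependent_intervalIntegral_veronese {x y : ℝ → ℝ} (hx : Continuous x)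
    (hy : Continuous y) {a b : ℝ} {ℓ : Fin 3 → ℝ → ℝ} (hℓ : ∀ i, Continuous (ℓ i))
    (hℓ0 : ∀ i, 0 ≤ ℓ i) (hℓne : ∀ i, ℓ i ≠ 0) (hℓab : ∀ i, tsupport (ℓ i) ⊆ Icc a b)
    (hℓconn : ∀ i, IsPreconnected (tsupport (ℓ i)))
    (hcross : ∀ i j, i ≠ j → ∀ s ∈ tsupport (ℓ i), ∀ t ∈ tsupport (ℓ j),
      x s * y t - y s * x t ≠ 0) :
    LinearIndependent ℝ fun i r => ∫ t in a..b, ℓ i t * veronese (x t) (y t) r := by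
  set B : Matrix (Fin 3) (Fin 3) ℝ := .of fun i r => ∫ t in a..b, ℓ i t * veronese (x t) (y t) r
  change LinearIndependent ℝ B.row
  rw [linearIndependent_rows_iff_isUnit, isUnit_iff_isUnit_det, isUnit_iff_ne_zero]
  intro hdet
  obtain ⟨S, hS0, hBS⟩ := exists_mulVec_eq_zero_iff.2 hdet
  refine hS0 ?_
  have hv : Continuous fun t => veronese (x t) (y t) := by
    refine continuous_pi fun r => ?_
    fin_cases r <;> simp only [veronese] <;> fun_prop
  -- a vanishing combination of the columns of `B` is a quadratic form `Q` with `∫ ℓᵢ Q(x, y) = 0`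
  have hint : ∀ i, ∫ t in a..b, ℓ i t * (veronese (x t) (y t) ⬝ᵥ S) = 0 := by
    intro i
    refine Eq.trans ?_ (congr_fun hBS i)
    simp only [dotProduct, Finset.mul_sum, mulVec, B, of_apply]
    rw [intervalIntegral.integral_finsetSum fun r _ => ?_]
    · simp_rw [← mul_assoc, intervalIntegral.integral_mul_const]
    · exact ((hℓ i).mul (((continuous_apply r).comp hv).mul continuous_const)).intervalIntegrable _ _
  choose t ht using fun i => exists_mem_tsupport_eq_zero_of_intervalIntegral_mul_eq_zero
    (hℓ i) (hℓ0 i) (hℓne i) (hℓab i) (hℓconn i) (hv.dotProduct continuous_const) (hint i)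
  exact eq_zero_of_forall_veronese_dotProduct_eq_zero
    (fun i j hij => hcross i j hij _ (ht i).1 _ (ht j).1) fun i => (ht i).2

theorem sq_add_sq_pos_of_det_eq_one {A : Matrix (Fin 2) (Fin 2) ℝ} (hA : A.det = 1) :
    0 < A 0 0 ^ 2 + A 0 1 ^ 2 := by
  rw [det_fin_two] at hA
  by_contra! h
  have h0 : A 0 0 = 0 := by nlinarith
  have h1 : A 0 1 = 0 := by nlinarith
  simp [h0, h1] at hA

/-- The argument of the first row `v` of `Φ`: when `det Φ = 1` it grows at rate `1 / |v|²`. -/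
noncomputable def rowPhase (Φ : ℝ → Matrix (Fin 2) (Fin 2) ℝ) (t : ℝ) : ℝ :=
  ∫ s in (0:ℝ)..t, (Φ s 0 0 ^ 2 + Φ s 0 1 ^ 2)⁻¹

def SolvesHill (q : ℝ → ℝ) (Φ : ℝ → Matrix (Fin 2) (Fin 2) ℝ) : Prop :=
  ∀ t : ℝ, ∀ i j, HasDerivAt (fun s => Φ s i j) ((!![0, 1; q t, 0] * Φ t) i j) t

namespace SolvesHill

variable {q : ℝ → ℝ} {Φ : ℝ → Matrix (Fin 2) (Fin 2) ℝ}

theorem hasDerivAt_fst_row (hΦ : SolvesHill q Φ) (t : ℝ) (j : Fin 2) :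
    HasDerivAt (fun s => Φ s 0 j) (Φ t 1 j) t := by
  simpa [mul_apply, Fin.sum_univ_two] using hΦ t 0 j

theorem hasDerivAt_snd_row (hΦ : SolvesHill q Φ) (t : ℝ) (j : Fin 2) :
    HasDerivAt (fun s => Φ s 1 j) (q t * Φ t 0 j) t := by
  simpa [mul_apply, Fin.sum_univ_two] using hΦ t 1 j

theorem continuous_entry (hΦ : SolvesHill q Φ) (i j : Fin 2) : Continuous fun t => Φ t i j :=
  continuous_iff_continuousAt.2 fun t => (hΦ t i j).continuousAt

theorem det_eq_one (hΦ : SolvesHill q Φ) (hΦ0 : Φ 0 = 1) (t : ℝ) : (Φ t).det = 1 := by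
  have hW : ∀ t, HasDerivAt (fun s => (Φ s).det) 0 t := fun t => by
    simp only [det_fin_two]
    refine ((hΦ.hasDerivAt_fst_row t 0 |>.mul (hΦ.hasDerivAt_snd_row t 1)).sub
      (hΦ.hasDerivAt_fst_row t 1 |>.mul (hΦ.hasDerivAt_snd_row t 0))).congr_deriv ?_
    ring
  rw [is_const_of_deriv_eq_zero (fun s => (hW s).differentiableAt) (fun s => (hW s).deriv) t 0,
    hΦ0, det_one]

theorem hasDerivAt_rowPhase (hΦ : SolvesHill q Φ) (hdet : ∀ t, (Φ t).det = 1) (t : ℝ) :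
    HasDerivAt (rowPhase Φ) (Φ t 0 0 ^ 2 + Φ t 0 1 ^ 2)⁻¹ t := by
  have hc : Continuous fun s => (Φ s 0 0 ^ 2 + Φ s 0 1 ^ 2)⁻¹ :=
    ((hΦ.continuous_entry 0 0).pow 2 |>.add ((hΦ.continuous_entry 0 1).pow 2)).inv₀
      fun s => (sq_add_sq_pos_of_det_eq_one (hdet s)).ne'
  exact intervalIntegral.integral_hasDerivAt_right (hc.intervalIntegrable _ _)
    (hc.stronglyMeasurableAtFilter _ _) hc.continuousAt

theorem strictMono_rowPhase (hΦ : SolvesHill q Φ) (hdet : ∀ t, (Φ t).det = 1) :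
    StrictMono (rowPhase Φ) :=
  strictMono_of_hasDerivAt_pos (hΦ.hasDerivAt_rowPhase hdet)
    fun t => inv_pos.2 (sq_add_sq_pos_of_det_eq_one (hdet t))

theorem cos_rowPhase_mul_sub_sin_rowPhase_mul_eq_zero (hΦ : SolvesHill q Φ) (hΦ0 : Φ 0 = 1)
    (t : ℝ) : cos (rowPhase Φ t) * Φ t 0 1 - sin (rowPhase Φ t) * Φ t 0 0 = 0 := by
  have hdet := hΦ.det_eq_one hΦ0
  set S := fun t => cos (rowPhase Φ t) * Φ t 0 1 - sin (rowPhase Φ t) * Φ t 0 0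
  set r := fun t => Φ t 0 0 ^ 2 + Φ t 0 1 ^ 2
  -- `S / √r` is the sine of the angle between `v` and `rowPhase`, which is constant
  have hG : ∀ t, HasDerivAt (fun t => S t ^ 2 / r t) 0 t := fun t => by
    have hφ := hΦ.hasDerivAt_rowPhase hdet t
    have hS := (hφ.cos.mul (hΦ.hasDerivAt_fst_row t 1)).sub
      (hφ.sin.mul (hΦ.hasDerivAt_fst_row t 0))
    have hr := ((hΦ.hasDerivAt_fst_row t 0).pow 2).add ((hΦ.hasDerivAt_fst_row t 1).pow 2)
    have hr0 := (sq_add_sq_pos_of_det_eq_one (hdet t)).ne'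
    refine ((hS.pow 2).div hr hr0).congr_deriv ?_
    have hW := hdet t
    rw [det_fin_two] at hW
    simp only [Pi.sub_apply, Pi.mul_apply, Pi.pow_apply, Pi.add_apply]
    rw [div_eq_zero_iff]
    left
    field_simp
    linear_combination 2 * S t * (cos (rowPhase Φ t) * Φ t 0 0 + sin (rowPhase Φ t) * Φ t 0 1) * hW
  have hconst :=
    is_const_of_deriv_eq_zero (fun s => (hG s).differentiableAt) (fun s => (hG s).deriv) t 0
  simpa [S, r, rowPhase, hΦ0, (sq_add_sq_pos_of_det_eq_one (hdet t)).ne'] using hconst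

theorem eqOn_rowPhase (hΦ : SolvesHill q Φ) (hΦ0 : Φ 0 = 1) {θ : ℝ → ℝ} {T : ℝ}
    (hθc : ContinuousOn θ (Icc 0 T)) (hθ0 : θ 0 = 0)
    (hpolar : ∀ t ∈ Icc (0:ℝ) T,
      Φ t 0 0 = √(Φ t 0 0 ^ 2 + Φ t 0 1 ^ 2) * cos (θ t) ∧
      Φ t 0 1 = √(Φ t 0 0 ^ 2 + Φ t 0 1 ^ 2) * sin (θ t)) :
    EqOn θ (rowPhase Φ) (Icc 0 T) := by
  have hdet := hΦ.det_eq_one hΦ0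
  have hsin : ∀ s ∈ Icc 0 T, sin (θ s - rowPhase Φ s) = 0 := by
    intro s hs
    obtain ⟨R, hR, h₀, h₁⟩ : ∃ R > 0, Φ s 0 0 = R * cos (θ s) ∧ Φ s 0 1 = R * sin (θ s) :=
      ⟨_, sqrt_pos.2 (sq_add_sq_pos_of_det_eq_one (hdet s)), hpolar s hs⟩
    have h := hΦ.cos_rowPhase_mul_sub_sin_rowPhase_mul_eq_zero hΦ0 s
    rw [h₀, h₁] at h
    have hRsin : R * sin (θ s - rowPhase Φ s) = 0 := by
      rw [sin_sub]
      linear_combination h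
    exact (mul_eq_zero.1 hRsin).resolve_left hR.ne'
  have hφc : Continuous (rowPhase Φ) :=
    continuous_iff_continuousAt.2 fun t => (hΦ.hasDerivAt_rowPhase hdet t).continuousAt
  intro t ht
  exact sub_eq_zero.1 <| isPreconnected_Icc.eq_zero_of_sin_eq_zero (hθc.sub hφc.continuousOn)
    hsin (left_mem_Icc.2 (ht.1.trans ht.2)) (by simp [hθ0, rowPhase]) ht

theorem fst_row_cross_ne_zero (hΦ : SolvesHill q Φ) (hΦ0 : Φ 0 = 1) {θ : ℝ → ℝ} {T : ℝ}
    (hθc : ContinuousOn θ (Icc 0 T)) (hθ0 : θ 0 = 0)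
    (hpolar : ∀ t ∈ Icc (0:ℝ) T,
      Φ t 0 0 = √(Φ t 0 0 ^ 2 + Φ t 0 1 ^ 2) * cos (θ t) ∧
      Φ t 0 1 = √(Φ t 0 0 ^ 2 + Φ t 0 1 ^ 2) * sin (θ t))
    {tm tp : ℝ} (htm : 0 ≤ tm) (htp : tp ≤ T) (hθπ : θ tp < θ tm + π)
    {s t : ℝ} (hs : s ∈ Icc tm tp) (ht : t ∈ Icc tm tp) (hst : s ≠ t) :
    Φ s 0 0 * Φ t 0 1 - Φ s 0 1 * Φ t 0 0 ≠ 0 := by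
  have hdet := hΦ.det_eq_one hΦ0
  have hsub : Icc tm tp ⊆ Icc 0 T := Icc_subset_Icc htm htp
  have hθ : StrictMonoOn θ (Icc tm tp) :=
    ((hΦ.strictMono_rowPhase hdet).strictMonoOn _).congr
      ((hΦ.eqOn_rowPhase hΦ0 hθc hθ0 hpolar).mono hsub).symm
  have hpos : ∀ {s t}, s ∈ Icc tm tp → t ∈ Icc tm tp → s < t →
      0 < Φ s 0 0 * Φ t 0 1 - Φ s 0 1 * Φ t 0 0 := by
    intro s t hs ht hst
    obtain ⟨Rs, hRs, hs₀, hs₁⟩ : ∃ R > 0, Φ s 0 0 = R * cos (θ s) ∧ Φ s 0 1 = R * sin (θ s) :=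
      ⟨_, sqrt_pos.2 (sq_add_sq_pos_of_det_eq_one (hdet s)), hpolar s (hsub hs)⟩
    obtain ⟨Rt, hRt, ht₀, ht₁⟩ : ∃ R > 0, Φ t 0 0 = R * cos (θ t) ∧ Φ t 0 1 = R * sin (θ t) :=
      ⟨_, sqrt_pos.2 (sq_add_sq_pos_of_det_eq_one (hdet t)), hpolar t (hsub ht)⟩
    have hlt : θ t - θ s < π := by
      have := hθ.monotoneOn (left_mem_Icc.2 (hs.1.trans hs.2)) hs hs.1
      have := hθ.monotoneOn ht (right_mem_Icc.2 (ht.1.trans ht.2)) ht.2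
      linarith
    have hsin := sin_pos_of_pos_of_lt_pi (sub_pos.2 (hθ hs ht hst)) hlt
    calc 0 < Rs * Rt * sin (θ t - θ s) := by positivity
      _ = _ := by rw [hs₀, hs₁, ht₀, ht₁, sin_sub]; ring
  rcases hst.lt_or_gt with h | h
  · exact (hpos hs ht h).ne'
  · have := hpos ht hs h
    intro h0
    linarith

end SolvesHill

theorem IsBump.tsupport_subset {ℓ : ℝ → ℝ} {I : Set ℝ} (h : IsBump ℓ I) : tsupport ℓ ⊆ I := by
  obtain ⟨a, b, -, hI, hts⟩ := h.2.2.2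
  rwa [hts]

theorem IsBump.isPreconnected_tsupport {ℓ : ℝ → ℝ} {I : Set ℝ} (h : IsBump ℓ I) :
    IsPreconnected (tsupport ℓ) := by
  obtain ⟨a, b, -, -, hts⟩ := h.2.2.2
  rw [hts]
  exact isPreconnected_Icc

theorem IsBump.mono {ℓ : ℝ → ℝ} {I J : Set ℝ} (h : IsBump ℓ I) (hIJ : I ⊆ J) : IsBump ℓ J :=
  let ⟨a, b, hab, hI, hts⟩ := h.2.2.2
  ⟨h.1, h.2.1, h.2.2.1, a, b, hab, hI.trans hIJ, hts⟩

theorem inv_mul_N0_mul {A : Matrix (Fin 2) (Fin 2) ℝ} (hA : A.det = 1) :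
    A⁻¹ * N0 * A = !![-(A 0 0 * A 0 1), -(A 0 1 ^ 2); A 0 0 ^ 2, A 0 0 * A 0 1] := by
  rw [inv_def, adjugate_fin_two, hA]
  ext i j
  fin_cases i <;> fin_cases j <;> simp [mul_apply, Fin.sum_univ_two, N0] <;> ring

theorem linearIndependent_monInt {Φ : ℝ → Matrix (Fin 2) (Fin 2) ℝ}
    (hv₁ : Continuous fun t => Φ t 0 0) (hv₂ : Continuous fun t => Φ t 0 1)
    (hdet : ∀ t, (Φ t).det = 1) {ℓ : Fin 3 → ℝ → ℝ} (hℓ : ∀ i, IsBump (ℓ i) (Icc 0 (2 * π)))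
    (hcross : ∀ i j, i ≠ j → ∀ s ∈ tsupport (ℓ i), ∀ t ∈ tsupport (ℓ j),
      Φ s 0 0 * Φ t 0 1 - Φ s 0 1 * Φ t 0 0 ≠ 0) :
    LinearIndependent ℝ fun i => monInt (ℓ i) Φ := by
  let coords : Matrix (Fin 2) (Fin 2) ℝ →ₗ[ℝ] Fin 3 → ℝ :=
    LinearMap.pi ![entryLinearMap ℝ ℝ 1 0, entryLinearMap ℝ ℝ 1 1, -entryLinearMap ℝ ℝ 0 1]
  have hcoords : coords ∘ (fun i => monInt (ℓ i) Φ) =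
      fun i r => ∫ t in (0:ℝ)..(2 * π), ℓ i t * veronese (Φ t 0 0) (Φ t 0 1) r := by
    ext i r
    fin_cases r <;> simp [coords, monInt, inv_mul_N0_mul (hdet _), veronese,
      intervalIntegral.integral_neg]
  refine LinearIndependent.of_comp coords ?_
  rw [hcoords]
  exact linearIndependent_intervalIntegral_veronese hv₁ hv₂ (fun i => (hℓ i).1.continuous)
    (fun i => (hℓ i).2.1) (fun i => (hℓ i).2.2.1) (fun i => (hℓ i).tsupport_subset)
    (fun i => (hℓ i).isPreconnected_tsupport) hcross

theorem stmt_2_general (q : ℝ → ℝ)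
    -- `Φ` is the fundamental matrix of the potential `q`:
    (Φ : ℝ → Matrix (Fin 2) (Fin 2) ℝ)
    (hΦ0 : Φ 0 = 1)
    (hΦ : ∀ t : ℝ, ∀ i j, HasDerivAt (fun s => Φ s i j) ((!![0, 1; q t, 0] * Φ t) i j) t)
    -- `θ` is the continuous argument lift of the first row of `Φ`:
    (θ : ℝ → ℝ) (hθc : ContinuousOn θ (Icc 0 (2 * π))) (hθ0 : θ 0 = 0)
    (hpolar : ∀ t ∈ Icc (0:ℝ) (2 * π),
      Φ t 0 0 = Real.sqrt ((Φ t 0 0) ^ 2 + (Φ t 0 1) ^ 2) * Real.cos (θ t) ∧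
      Φ t 0 1 = Real.sqrt ((Φ t 0 0) ^ 2 + (Φ t 0 1) ^ 2) * Real.sin (θ t))
    (tm tp : ℝ) (htm : 0 ≤ tm) (htp : tp ≤ 2 * π)
    (hθπ : θ tp < θ tm + π)
    (ℓ₁ ℓ₂ ℓ₃ : ℝ → ℝ)
    (hℓ₁ : IsBump ℓ₁ (Icc tm tp)) (hℓ₂ : IsBump ℓ₂ (Icc tm tp))
    (hℓ₃ : IsBump ℓ₃ (Icc tm tp))
    (hd₁₂ : Disjoint (tsupport ℓ₁) (tsupport ℓ₂))
    (hd₁₃ : Disjoint (tsupport ℓ₁) (tsupport ℓ₃))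
    (hd₂₃ : Disjoint (tsupport ℓ₂) (tsupport ℓ₃)) :
    LinearIndependent ℝ ![monInt ℓ₁ Φ, monInt ℓ₂ Φ, monInt ℓ₃ Φ] := by
  have hΦ : SolvesHill q Φ := hΦ
  set ℓ : Fin 3 → ℝ → ℝ := ![ℓ₁, ℓ₂, ℓ₃]
  have hℓ : ∀ i, IsBump (ℓ i) (Icc tm tp) := by
    intro i
    fin_cases i <;> assumption
  have hdisj : ∀ i j, i ≠ j → Disjoint (tsupport (ℓ i)) (tsupport (ℓ j)) := by
    intro i j hij
    fin_cases i <;> fin_cases j <;>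
      first | exact absurd rfl hij | assumption | exact Disjoint.symm ‹_›
  have hLI := linearIndependent_monInt (hΦ.continuous_entry 0 0) (hΦ.continuous_entry 0 1)
    (hΦ.det_eq_one hΦ0) (fun i => (hℓ i).mono (Icc_subset_Icc htm htp))
    fun i j hij s hs t ht => hΦ.fst_row_cross_ne_zero hΦ0 hθc hθ0 hpolar htm htp hθπ
      ((hℓ i).tsupport_subset hs) ((hℓ j).tsupport_subset ht) ((hdisj i j hij).ne_of_mem hs ht)
  convert hLI using 1
  ext i : 1
  fin_cases i <;> rfl

/-- Lemma 2.2(b). If `θ_q(t⁺) < θ_q(t⁻) + π` and `ℓ₁, ℓ₂, ℓ₃` are bumps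
with pairwise disjoint supports in `[t⁻, t⁺]`, then the matrices
`Mᵢ = ∫₀^{2π} ℓᵢ(t)·Φ_q(t)⁻¹·N₀·Φ_q(t) dt` are linearly independent in `M₂(ℝ)`. -/
theorem stmt_2 (q : ℝ → ℝ) (hq : Continuous q)
    -- `Φ` is the fundamental matrix of the potential `q`:
    (Φ : ℝ → Matrix (Fin 2) (Fin 2) ℝ)
    (hΦ0 : Φ 0 = 1)
    (hΦ : ∀ t : ℝ, ∀ i j, HasDerivAt (fun s => Φ s i j) ((!![0, 1; q t, 0] * Φ t) i j) t)
    -- `θ` is the continuous argument lift of the first row of `Φ`: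
    (θ : ℝ → ℝ) (hθc : ContinuousOn θ (Icc 0 (2 * π))) (hθ0 : θ 0 = 0)
    (hpolar : ∀ t ∈ Icc (0:ℝ) (2 * π),
      Φ t 0 0 = Real.sqrt ((Φ t 0 0) ^ 2 + (Φ t 0 1) ^ 2) * Real.cos (θ t) ∧
      Φ t 0 1 = Real.sqrt ((Φ t 0 0) ^ 2 + (Φ t 0 1) ^ 2) * Real.sin (θ t))
    (tm tp : ℝ) (htm : 0 ≤ tm) (htmp : tm < tp) (htp : tp ≤ 2 * π)
    (hθπ : θ tp < θ tm + π)
    (ℓ₁ ℓ₂ ℓ₃ : ℝ → ℝ)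
    (hℓ₁ : IsBump ℓ₁ (Icc tm tp)) (hℓ₂ : IsBump ℓ₂ (Icc tm tp))
    (hℓ₃ : IsBump ℓ₃ (Icc tm tp))
    (hd₁₂ : Disjoint (tsupport ℓ₁) (tsupport ℓ₂))
    (hd₁₃ : Disjoint (tsupport ℓ₁) (tsupport ℓ₃))
    (hd₂₃ : Disjoint (tsupport ℓ₂) (tsupport ℓ₃)) :
    LinearIndependent ℝ ![monInt ℓ₁ Φ, monInt ℓ₂ Φ, monInt ℓ₃ Φ] :=
  stmt_2_general q Φ hΦ0 hΦ θ hθc hθ0 hpolar tm tp htm htp hθπ ℓ₁ ℓ₂ ℓ₃ hℓ₁ hℓ₂ hℓ₃ hd₁₂ hd₁₃ hd₂₃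
end

section
/- Let q : ℝ → ℝ be continuous. The linear map that sends a continuous function w : [0,2π] → ℝ to the matrix Φ_q(2π)·∫₀^{2π} w(t)·Φ_q(t)⁻¹·N₀·Φ_q(t) dt ∈ M₂(ℝ) has range equal to the 3-dimensional subspace {Φ_q(2π)·M : M ∈ M₂(ℝ), tr M = 0}; moreover the same conclusion holds when the domain is restricted to smooth functions w supported in an arbitrarily prescribed nonempty open subinterval of (0,2π). -/
open Real Set Matrix

/-!
`Φ` has determinant one (its Wronskian is constant), so with `(u, v)` the first row of `Φ`,
`Φ⁻¹ N₀ Φ = [[-uv, -v²], [u², uv]]`, which is trace-free. Surjectivity onto the trace-free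
matrices thus reduces to the moment map `w ↦ (∫ w u², ∫ w uv, ∫ w v²)` filling `ℝ³` on test
functions supported in `(a, b)`. A linear functional killing all moments gives
`c₀ u² + c₁ uv + c₂ v² = 0` on `(a, b)` by the fundamental lemma of the calculus of variations;
differentiating twice, using `u'' = q u` and `v'' = q v`, shows that the quadratic form
vanishes on the basis `(u, v)`, `(u', v')` and its polar form vanishes on the pair, so `c = 0`.
-/

open MeasureTheory Filter Topology Distributions TopologicalSpace

namespace TestFunction

variable {E : Type*} [NormedAddCommGroup E] [NormedSpace ℝ E] [FiniteDimensional ℝ E]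
  [MeasurableSpace E] [BorelSpace E] {μ : Measure E} [IsLocallyFiniteMeasure μ] [μ.IsOpenPosMeasure]
  {Ω : Opens E}

theorem eqOn_zero_of_integral_mul_eq_zero {g : E → ℝ} (hg : Continuous g)
    (h : ∀ w : 𝓓(Ω, ℝ), ∫ x, w x * g x ∂μ = 0) : EqOn g 0 Ω := by
  have hae : ∀ᵐ x ∂μ, x ∈ Ω → g x = 0 :=
    Ω.isOpen.ae_eq_zero_of_integral_contDiff_smul_eq_zero
      (hg.locallyIntegrable.locallyIntegrableOn _) fun w hw hwc hwΩ => h ⟨w, hw, hwc, hwΩ⟩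
  refine μ.eqOn_open_of_ae_eq ?_ Ω.isOpen hg.continuousOn continuousOn_const
  rwa [Filter.EventuallyEq, ae_restrict_iff' Ω.isOpen.measurableSet]

theorem exists_integral_mul_eq {ι : Type*} [Fintype ι] {f : ι → E → ℝ}
    (hf : ∀ i, Continuous (f i))
    (hind : ∀ c : ι → ℝ, (∀ x ∈ Ω, ∑ i, c i * f i x = 0) → c = 0) (y : ι → ℝ) :
    ∃ w : 𝓓(Ω, ℝ), ∀ i, ∫ x, w x * f i x ∂μ = y i := by
  classical
  have hloc : ∀ i, LocallyIntegrableOn (f i) Ω μ :=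
    fun i => (hf i).locallyIntegrable.locallyIntegrableOn _
  let L : 𝓓(Ω, ℝ) →ₗ[ℝ] ι → ℝ := LinearMap.pi fun i =>
    (integralAgainstBilinCLM (ContinuousLinearMap.mul ℝ ℝ) μ (f i) : 𝓓(Ω, ℝ) →L[ℝ] ℝ).toLinearMap
  have hL : ∀ w i, L w i = ∫ x, w x * f i x ∂μ := fun w i =>
    integralAgainstBilinCLM_eq_integral (hloc i)
  suffices LinearMap.range L = ⊤ by
    obtain ⟨w, hw⟩ := LinearMap.range_eq_top.mp this y
    exact ⟨w, fun i => by rw [← hL, hw]⟩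
  by_contra hne
  obtain ⟨φ, hφ, hker⟩ := (LinearMap.range L).exists_le_ker_of_lt_top (lt_top_iff_ne_top.mpr hne)
  set c : ι → ℝ := fun i => φ (Pi.single i 1)
  have hφc : ∀ z, φ z = ∑ i, c i * z i := fun z => by
    conv_lhs => rw [pi_eq_sum_univ' z]
    simp only [map_sum, map_smul, smul_eq_mul, c, mul_comm]
  refine hφ (LinearMap.ext fun z => ?_)
  rw [hφc, hind c (eqOn_zero_of_integral_mul_eq_zero (μ := μ) (by fun_prop) fun w => ?_)]
  · simp
  have hw := hker (LinearMap.mem_range_self L w)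
  rw [LinearMap.mem_ker, hφc] at hw
  simp_rw [hL] at hw
  have hint : ∀ i, Integrable (fun x => c i * (w x * f i x)) μ := fun i =>
    (TestFunction.integrable_bilin (ContinuousLinearMap.mul ℝ ℝ) (hloc i) w).const_mul (c i)
  simp_rw [← hw, ← integral_const_mul, ← integral_finsetSum _ fun i _ => hint i]
  simp_rw [Finset.mul_sum, mul_left_comm (w _)]

end TestFunction

theorem quadratic_coeffs_eq_zero_of_wronskian_ne_zero {c₀ c₁ c₂ u v u' v' : ℝ}
    (h₁ : c₀ * u ^ 2 + c₁ * (u * v) + c₂ * v ^ 2 = 0)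
    (h₂ : c₀ * (2 * u) * u' + c₁ * (u' * v + u * v') + c₂ * (2 * v) * v' = 0)
    (h₃ : c₀ * u' ^ 2 + c₁ * (u' * v') + c₂ * v' ^ 2 = 0)
    (hW : u * v' - v * u' ≠ 0) : c₀ = 0 ∧ c₁ = 0 ∧ c₂ = 0 := by
  have hW2 : (u * v' - v * u') ^ 2 ≠ 0 := pow_ne_zero 2 hW
  refine ⟨?_, ?_, ?_⟩ <;> refine (mul_eq_zero.mp ?_).resolve_right hW2
  · linear_combination v' ^ 2 * h₁ - v * v' * h₂ + v ^ 2 * h₃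
  · linear_combination (-2 * u' * v') * h₁ + (u * v' + u' * v) * h₂ - 2 * u * v * h₃
  · linear_combination u' ^ 2 * h₁ - u * u' * h₂ + u ^ 2 * h₃

theorem quadratic_coeffs_eq_zero_of_eventually_eq_zero {q u v u' v' : ℝ → ℝ}
    (hu : ∀ t, HasDerivAt u (u' t) t) (hv : ∀ t, HasDerivAt v (v' t) t)
    (hu' : ∀ t, HasDerivAt u' (q t * u t) t) (hv' : ∀ t, HasDerivAt v' (q t * v t) t)
    {t₀ c₀ c₁ c₂ : ℝ} (hW : u t₀ * v' t₀ - v t₀ * u' t₀ ≠ 0)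
    (h : ∀ᶠ t in 𝓝 t₀, c₀ * u t ^ 2 + c₁ * (u t * v t) + c₂ * v t ^ 2 = 0) :
    c₀ = 0 ∧ c₁ = 0 ∧ c₂ = 0 := by
  set g := fun t => c₀ * u t ^ 2 + c₁ * (u t * v t) + c₂ * v t ^ 2 with hg_def
  set g' := fun t => c₀ * (2 * u t) * u' t + c₁ * (u' t * v t + u t * v' t) + c₂ * (2 * v t) * v' t
    with hg'_def
  have hg : ∀ t, HasDerivAt g (g' t) t := fun t => by
    refine (((((hu t).fun_pow 2).const_mul c₀).fun_add
      (((hu t).fun_mul (hv t)).const_mul c₁)).fun_add (((hv t).fun_pow 2).const_mul c₂)).congr_deriv ?_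
    simp only [hg'_def]; ring
  have hg' : HasDerivAt g'
      (2 * (c₀ * u' t₀ ^ 2 + c₁ * (u' t₀ * v' t₀) + c₂ * v' t₀ ^ 2) + 2 * q t₀ * g t₀) t₀ := by
    have hu₀ := hu t₀; have hv₀ := hv t₀; have hu'₀ := hu' t₀; have hv'₀ := hv' t₀
    refine (((((hu₀.const_mul 2).const_mul c₀).fun_mul hu'₀).fun_add
      (((hu'₀.fun_mul hv₀).fun_add (hu₀.fun_mul hv'₀)).const_mul c₁)).fun_add
      (((hv₀.const_mul 2).const_mul c₂).fun_mul hv'₀)).congr_deriv ?_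
    simp only [hg_def]; ring
  have hg'_zero : g' =ᶠ[𝓝 t₀] 0 := by
    filter_upwards [h.eventually_nhds] with t ht
    exact (hg t).unique ((hasDerivAt_const t 0).congr_of_eventuallyEq ht)
  have e₁ : g t₀ = 0 := h.self_of_nhds
  have e₂ : g' t₀ = 0 := hg'_zero.self_of_nhds
  have e₃ := hg'.unique ((hasDerivAt_const t₀ 0).congr_of_eventuallyEq hg'_zero)
  rw [e₁, mul_zero, add_zero, mul_eq_zero] at e₃
  exact quadratic_coeffs_eq_zero_of_wronskian_ne_zero e₁ e₂ (e₃.resolve_left two_ne_zero) hW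

/-- Each column of `Φ` is `(y, y')` for a solution of `y'' = q y`. -/
def IsHillSolution (q : ℝ → ℝ) (Φ : ℝ → Matrix (Fin 2) (Fin 2) ℝ) : Prop :=
  ∀ t : ℝ, ∀ i j, HasDerivAt (fun s => Φ s i j) ((!![0, 1; q t, 0] * Φ t) i j) t

namespace IsHillSolution

variable {q : ℝ → ℝ} {Φ : ℝ → Matrix (Fin 2) (Fin 2) ℝ}

theorem hasDerivAt_zero (hΦ : IsHillSolution q Φ) (t : ℝ) (j : Fin 2) :
    HasDerivAt (fun s => Φ s 0 j) (Φ t 1 j) t := by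
  simpa [Matrix.mul_apply, Fin.sum_univ_two] using hΦ t 0 j

theorem hasDerivAt_one (hΦ : IsHillSolution q Φ) (t : ℝ) (j : Fin 2) :
    HasDerivAt (fun s => Φ s 1 j) (q t * Φ t 0 j) t := by
  simpa [Matrix.mul_apply, Fin.sum_univ_two] using hΦ t 1 j

theorem continuous_apply (hΦ : IsHillSolution q Φ) (i j : Fin 2) :
    Continuous fun t => Φ t i j :=
  continuous_iff_continuousAt.mpr fun t => (hΦ t i j).continuousAt

theorem det_eq_det (hΦ : IsHillSolution q Φ) (t s : ℝ) : (Φ t).det = (Φ s).det := by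
  have hW : ∀ t, HasDerivAt (fun s => (Φ s).det) 0 t := fun t => by
    simp only [Matrix.det_fin_two]
    refine (((hΦ.hasDerivAt_zero t 0).fun_mul (hΦ.hasDerivAt_one t 1)).fun_sub
      ((hΦ.hasDerivAt_zero t 1).fun_mul (hΦ.hasDerivAt_one t 0))).congr_deriv ?_
    ring
  exact is_const_of_deriv_eq_zero (fun t => (hW t).differentiableAt) (fun t => (hW t).deriv) t s

end IsHillSolution

theorem inv_mul_N0_mul_of_det_eq_one {P : Matrix (Fin 2) (Fin 2) ℝ} (hP : P.det = 1) :
    P⁻¹ * N0 * P = !![-(P 0 0 * P 0 1), -(P 0 1 ^ 2); P 0 0 ^ 2, P 0 0 * P 0 1] := by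
  rw [Matrix.inv_def, hP, Ring.inverse_one, one_smul, Matrix.adjugate_fin_two]
  ext i j
  fin_cases i <;> fin_cases j <;> simp [N0, Matrix.mul_apply, Fin.sum_univ_two] <;> ring

theorem monInt_eq_of_det_eq_one {Φ : ℝ → Matrix (Fin 2) (Fin 2) ℝ} (hΦ : ∀ t, (Φ t).det = 1)
    (w : ℝ → ℝ) :
    monInt w Φ =
      !![-∫ t in (0:ℝ)..(2 * π), w t * (Φ t 0 0 * Φ t 0 1),
         -∫ t in (0:ℝ)..(2 * π), w t * Φ t 0 1 ^ 2;
         ∫ t in (0:ℝ)..(2 * π), w t * Φ t 0 0 ^ 2,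
         ∫ t in (0:ℝ)..(2 * π), w t * (Φ t 0 0 * Φ t 0 1)] := by
  ext i j
  simp only [monInt, Matrix.of_apply, inv_mul_N0_mul_of_det_eq_one (hΦ _)]
  fin_cases i <;> fin_cases j <;> simp [← intervalIntegral.integral_neg]

theorem trace_monInt_eq_zero {Φ : ℝ → Matrix (Fin 2) (Fin 2) ℝ} (hΦ : ∀ t, (Φ t).det = 1)
    (w : ℝ → ℝ) : (monInt w Φ).trace = 0 := by
  simp [monInt_eq_of_det_eq_one hΦ, Matrix.trace_fin_two]

theorem IsHillSolution.exists_monInt_eq {q : ℝ → ℝ} {Φ : ℝ → Matrix (Fin 2) (Fin 2) ℝ}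
    (hΦ : IsHillSolution q Φ) (hdet : ∀ t, (Φ t).det = 1) {a b : ℝ} (ha : 0 ≤ a) (hab : a < b)
    (hb : b ≤ 2 * π) {M : Matrix (Fin 2) (Fin 2) ℝ} (hM : M.trace = 0) :
    ∃ w : ℝ → ℝ, ContDiff ℝ (⊤ : ℕ∞) w ∧ tsupport w ⊆ Ioo a b ∧ monInt w Φ = M := by
  let f : Fin 3 → ℝ → ℝ :=
    ![fun t => Φ t 0 0 ^ 2, fun t => Φ t 0 0 * Φ t 0 1, fun t => Φ t 0 1 ^ 2]
  have hf : ∀ i, Continuous (f i) := by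
    have h₀ := hΦ.continuous_apply 0 0
    have h₁ := hΦ.continuous_apply 0 1
    intro i
    fin_cases i
    exacts [h₀.pow 2, h₀.mul h₁, h₁.pow 2]
  have hind : ∀ c : Fin 3 → ℝ, (∀ t ∈ Ioo a b, ∑ i, c i * f i t = 0) → c = 0 := by
    intro c hc
    have hmid : (a + b) / 2 ∈ Ioo a b := ⟨by linarith, by linarith⟩
    obtain ⟨h₀, h₁, h₂⟩ := quadratic_coeffs_eq_zero_of_eventually_eq_zero
      (hΦ.hasDerivAt_zero · 0) (hΦ.hasDerivAt_zero · 1)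
      (hΦ.hasDerivAt_one · 0) (hΦ.hasDerivAt_one · 1)
      (by rw [← Matrix.det_fin_two, hdet]; exact one_ne_zero)
      (eventually_of_mem (Ioo_mem_nhds hmid.1 hmid.2) fun t ht => by
        simpa [f, Fin.sum_univ_three] using hc t ht)
    ext i; fin_cases i <;> assumption
  obtain ⟨w, hw⟩ := TestFunction.exists_integral_mul_eq (μ := volume) (Ω := ⟨Ioo a b, isOpen_Ioo⟩)
    hf hind ![M 1 0, M 1 1, -M 0 1]
  have hint : ∀ g : ℝ → ℝ, ∫ t in (0:ℝ)..(2 * π), w t * g t = ∫ t, w t * g t := fun g =>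
    intervalIntegral.integral_eq_integral_of_support_subset <|
      (Function.support_mul_subset_left _ _).trans <| subset_tsupport _ |>.trans <|
        w.tsupport_subset.trans <| Ioo_subset_Ioc_self.trans <| Ioc_subset_Ioc ha hb
  refine ⟨w, w.contDiff, w.tsupport_subset, ?_⟩
  have h₀ := hw 0; have h₁ := hw 1; have h₂ := hw 2
  simp only [f, Matrix.cons_val] at h₀ h₁ h₂
  rw [Matrix.trace_fin_two] at hM
  rw [monInt_eq_of_det_eq_one hdet]
  ext i j
  fin_cases i <;> fin_cases j <;> simp [hint, h₀, h₁, h₂]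
  linarith

theorem stmt_3_general (q : ℝ → ℝ)
    -- `Φ` is the fundamental matrix of the potential `q`:
    (Φ : ℝ → Matrix (Fin 2) (Fin 2) ℝ)
    (hΦ0 : Φ 0 = 1)
    (hΦ : ∀ t : ℝ, ∀ i j, HasDerivAt (fun s => Φ s i j) ((!![0, 1; q t, 0] * Φ t) i j) t) :
    ((fun w : ℝ → ℝ => Φ (2 * π) * monInt w Φ) ''
        {w : ℝ → ℝ | ContinuousOn w (Icc 0 (2 * π))} =
      {X : Matrix (Fin 2) (Fin 2) ℝ |
        ∃ M : Matrix (Fin 2) (Fin 2) ℝ, M.trace = 0 ∧ X = Φ (2 * π) * M}) ∧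
    ∀ a b : ℝ, 0 ≤ a → a < b → b ≤ 2 * π →
      (fun w : ℝ → ℝ => Φ (2 * π) * monInt w Φ) ''
          {w : ℝ → ℝ | ContDiff ℝ (⊤ : ℕ∞) w ∧ tsupport w ⊆ Ioo a b} =
        {X : Matrix (Fin 2) (Fin 2) ℝ |
          ∃ M : Matrix (Fin 2) (Fin 2) ℝ, M.trace = 0 ∧ X = Φ (2 * π) * M} := by
  have hdet : ∀ t, (Φ t).det = 1 := fun t => by
    rw [IsHillSolution.det_eq_det hΦ t 0, hΦ0, Matrix.det_one]
  have image_subset : ∀ S : Set (ℝ → ℝ), (fun w => Φ (2 * π) * monInt w Φ) '' S ⊆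
      {X | ∃ M : Matrix (Fin 2) (Fin 2) ℝ, M.trace = 0 ∧ X = Φ (2 * π) * M} := by
    rintro S _ ⟨w, -, rfl⟩
    exact ⟨_, trace_monInt_eq_zero hdet w, rfl⟩
  have smooth : ∀ a b : ℝ, 0 ≤ a → a < b → b ≤ 2 * π →
      (fun w : ℝ → ℝ => Φ (2 * π) * monInt w Φ) ''
          {w : ℝ → ℝ | ContDiff ℝ (⊤ : ℕ∞) w ∧ tsupport w ⊆ Ioo a b} =
        {X | ∃ M : Matrix (Fin 2) (Fin 2) ℝ, M.trace = 0 ∧ X = Φ (2 * π) * M} := by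
    refine fun a b ha hab hb => (image_subset _).antisymm ?_
    rintro _ ⟨M, hM, rfl⟩
    obtain ⟨w, hw, hws, rfl⟩ := IsHillSolution.exists_monInt_eq hΦ hdet ha hab hb hM
    exact ⟨w, ⟨hw, hws⟩, rfl⟩
  refine ⟨(image_subset _).antisymm ?_, smooth⟩
  rw [← smooth 0 (2 * π) le_rfl (by positivity) le_rfl]
  exact image_mono fun w hw => hw.1.continuous.continuousOn

/-- Lemma 2.2(b), submersion form. The derivative of the matrix-level
monodromy map, `w ↦ Φ_q(2π)·∫₀^{2π} w(t)·Φ_q(t)⁻¹·N₀·Φ_q(t) dt`, has range exactly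
`{Φ_q(2π)·M : tr M = 0}`, on continuous `w`, and also on smooth `w` supported in any
prescribed nonempty open subinterval of `(0,2π)`. -/
theorem stmt_3 (q : ℝ → ℝ) (hq : Continuous q)
    -- `Φ` is the fundamental matrix of the potential `q`:
    (Φ : ℝ → Matrix (Fin 2) (Fin 2) ℝ)
    (hΦ0 : Φ 0 = 1)
    (hΦ : ∀ t : ℝ, ∀ i j, HasDerivAt (fun s => Φ s i j) ((!![0, 1; q t, 0] * Φ t) i j) t) :
    ((fun w : ℝ → ℝ => Φ (2 * π) * monInt w Φ) ''
        {w : ℝ → ℝ | ContinuousOn w (Icc 0 (2 * π))} =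
      {X : Matrix (Fin 2) (Fin 2) ℝ |
        ∃ M : Matrix (Fin 2) (Fin 2) ℝ, M.trace = 0 ∧ X = Φ (2 * π) * M}) ∧
    ∀ a b : ℝ, 0 ≤ a → a < b → b ≤ 2 * π →
      (fun w : ℝ → ℝ => Φ (2 * π) * monInt w Φ) ''
          {w : ℝ → ℝ | ContDiff ℝ (⊤ : ℕ∞) w ∧ tsupport w ⊆ Ioo a b} =
        {X : Matrix (Fin 2) (Fin 2) ℝ |
          ∃ M : Matrix (Fin 2) (Fin 2) ℝ, M.trace = 0 ∧ X = Φ (2 * π) * M} :=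
  stmt_3_general q Φ hΦ0 hΦ
end

section
/- Let f : ℝ → ℝ be smooth with f' nowhere flat, and let u : ℝ → ℝ be continuous and 2π-periodic. Assume either that u is not constant, or that u is constant with f''(u(0)) ≠ 0. Then the linear map sending a continuous 2π-periodic v : ℝ → ℝ to Φ(2π)·∫₀^{2π} f''(u(t))·v(t)·Φ(t)⁻¹·N₀·Φ(t) dt, where Φ = Φ_{f'∘u}, has range equal to {Φ(2π)·M : M ∈ M₂(ℝ), tr M = 0}; that is, the nonlinear monodromy map is a submersion at u. -/
/-!
The first row `a = Φ₀₀`, `b = Φ₀₁` of `Φ` consists of solutions of Hill's equation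
`y'' = (f' ∘ u) y` with Wronskian `det Φ = 1`, and `Φ⁻¹ N₀ Φ = [[-ab, -b²], [a², ab]]`. Hence the
derivative is `v ↦ Φ(2π) M(v)` with `M(v)` traceless, and it is onto the traceless matrices as soon
as the three moments `v ↦ ∫ v hᵢ` of `h = g · (ab, b², a²)`, `g = f'' ∘ u`, are jointly onto `ℝ³`.

Because `f'` is nowhere flat, `g` does not vanish at some `t₀ ∈ (0, 2π)`. Differentiating a relation
`∑ kᵢ hᵢ = 0` twice near `t₀` shows that the binary quadratic form `k` vanishes, together with its
polarization, on the basis `(a, b), (a', b')`; so `k = 0`. Thus the Gram matrix of the `hᵢ` for the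
weight `sin²(t/2)` is invertible, and since the weight vanishes at `0` and `2π` the resulting
`v = sin²(t/2) ∑ cⱼ hⱼ` extends to a continuous `2π`-periodic function.
-/

open Real Set Matrix

def NowhereFlat (g : ℝ → ℝ) : Prop :=
  ∃ r : ℕ, 0 < r ∧ ∀ x : ℝ, ∃ r' : ℕ, 0 < r' ∧ r' ≤ r ∧ iteratedDeriv r' g x ≠ 0

open Filter Topology

theorem NowhereFlat.dense_deriv_ne_zero {g : ℝ → ℝ} (hg : NowhereFlat g) :
    Dense {y | deriv g y ≠ 0} := by
  intro x
  rw [mem_closure_iff_frequently]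
  by_contra hflat
  have hzero : deriv g =ᶠ[𝓝 x] 0 := (not_frequently.mp hflat).mono fun _ hy => not_not.mp hy
  obtain ⟨r, -, hr⟩ := hg
  obtain ⟨r', hr'0, -, hne⟩ := hr x
  obtain ⟨k, rfl⟩ := Nat.exists_eq_add_of_lt hr'0
  rw [zero_add, iteratedDeriv_succ', hzero.iteratedDeriv_eq] at hne
  simp at hne

theorem exists_deriv_comp_ne_zero {g u : ℝ → ℝ} (hg : NowhereFlat g) (hu : Continuous u)
    (hcase : (¬ ∃ c : ℝ, u = fun _ => c) ∨ (∃ c : ℝ, (u = fun _ => c) ∧ deriv g c ≠ 0)) :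
    ∃ t, deriv g (u t) ≠ 0 := by
  rcases hcase with hnc | ⟨c, rfl, hc⟩
  · obtain ⟨s, hs⟩ : ∃ s, u s ≠ u 0 := by
      by_contra! h
      exact hnc ⟨u 0, funext h⟩
    have hsub : Ioo (min (u s) (u 0)) (max (u s) (u 0)) ⊆ range u :=
      Ioo_subset_Icc_self.trans ((isPreconnected_range hu).ordConnected.uIcc_subset
        (mem_range_self s) (mem_range_self 0))
    obtain ⟨y, hy, hy'⟩ := hg.dense_deriv_ne_zero.inter_open_nonempty _ isOpen_Ioo
      (nonempty_Ioo.mpr (min_lt_max.mpr hs))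
    obtain ⟨t, rfl⟩ := hsub hy
    exact ⟨t, hy'⟩
  · exact ⟨0, hc⟩

theorem Function.Periodic.exists_mem_Ioo_ne_zero {g : ℝ → ℝ} {c : ℝ} (hg : Continuous g)
    (hper : Function.Periodic g c) (hc : 0 < c) {t : ℝ} (ht : g t ≠ 0) :
    ∃ s ∈ Ioo 0 c, g s ≠ 0 := by
  by_contra! h
  have hIcc : EqOn g 0 (Icc 0 c) := by
    simpa [closure_Ioo hc.ne] using Set.EqOn.closure (f := g) (g := 0) h hg continuous_const
  obtain ⟨s, hs, hts⟩ := hper.exists_mem_Ico₀ hc t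
  exact ht (hts.trans (hIcc (Ico_subset_Icc_self hs)))

theorem binary_quadratic_eq_zero {K : Type*} [Field K] {a b c x₁ x₂ y₁ y₂ : K}
    (hW : x₁ * y₂ - x₂ * y₁ ≠ 0)
    (hx : a * (x₁ * x₂) + b * x₂ ^ 2 + c * x₁ ^ 2 = 0)
    (hxy : a * (y₁ * x₂ + x₁ * y₂) + 2 * b * (x₂ * y₂) + 2 * c * (x₁ * y₁) = 0)
    (hy : a * (y₁ * y₂) + b * y₂ ^ 2 + c * y₁ ^ 2 = 0) :
    a = 0 ∧ b = 0 ∧ c = 0 := by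
  have hW2 := pow_ne_zero 2 hW
  have hc : c = 0 := by
    refine (mul_eq_zero.mp ?_).resolve_right hW2
    linear_combination y₂ ^ 2 * hx - x₂ * y₂ * hxy + x₂ ^ 2 * hy
  have hb : b = 0 := by
    refine (mul_eq_zero.mp ?_).resolve_right hW2
    linear_combination y₁ ^ 2 * hx - x₁ * y₁ * hxy + x₁ ^ 2 * hy
  subst hb hc
  refine ⟨(mul_eq_zero.mp ?_).resolve_right hW2, rfl, rfl⟩
  linear_combination (x₁ * y₂ + x₂ * y₁) * hxy - 4 * y₁ * y₂ * hx

section Hill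

variable {q y₁ y₂ z₁ z₂ : ℝ → ℝ} (hy₁ : ∀ t, HasDerivAt y₁ (z₁ t) t)
  (hy₂ : ∀ t, HasDerivAt y₂ (z₂ t) t) (hz₁ : ∀ t, HasDerivAt z₁ (q t * y₁ t) t)
  (hz₂ : ∀ t, HasDerivAt z₂ (q t * y₂ t) t)
include hy₁ hy₂ hz₁ hz₂

theorem hill_wronskian_eq (s t : ℝ) :
    y₁ t * z₂ t - y₂ t * z₁ t = y₁ s * z₂ s - y₂ s * z₁ s := by
  have hW : ∀ r, HasDerivAt (fun t => y₁ t * z₂ t - y₂ t * z₁ t) 0 r := fun r =>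
    (((hy₁ r).mul (hz₂ r)).sub ((hy₂ r).mul (hz₁ r))).congr_deriv (by ring)
  exact is_const_of_deriv_eq_zero (fun r => (hW r).differentiableAt) (fun r => (hW r).deriv) t s

theorem hill_products_coeffs_eq_zero {t₀ : ℝ} (hW : y₁ t₀ * z₂ t₀ - y₂ t₀ * z₁ t₀ ≠ 0) {a b c : ℝ}
    (hF : (fun t => a * (y₁ t * y₂ t) + b * y₂ t ^ 2 + c * y₁ t ^ 2) =ᶠ[𝓝 t₀] 0) :
    a = 0 ∧ b = 0 ∧ c = 0 := by
  have hF' : ∀ t, HasDerivAt (fun t => a * (y₁ t * y₂ t) + b * y₂ t ^ 2 + c * y₁ t ^ 2)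
      (a * (z₁ t * y₂ t + y₁ t * z₂ t) + 2 * b * (y₂ t * z₂ t) + 2 * c * (y₁ t * z₁ t)) t :=
    fun t => ((((hy₁ t).mul (hy₂ t)).const_mul a).add (((hy₂ t).pow 2).const_mul b) |>.add
      (((hy₁ t).pow 2).const_mul c)).congr_deriv (by ring)
  have hF'' : HasDerivAt
      (fun t => a * (z₁ t * y₂ t + y₁ t * z₂ t) + 2 * b * (y₂ t * z₂ t) + 2 * c * (y₁ t * z₁ t))
      (2 * q t₀ * (a * (y₁ t₀ * y₂ t₀) + b * y₂ t₀ ^ 2 + c * y₁ t₀ ^ 2)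
        + 2 * (a * (z₁ t₀ * z₂ t₀) + b * z₂ t₀ ^ 2 + c * z₁ t₀ ^ 2)) t₀ :=
    ((((hz₁ t₀).mul (hy₂ t₀)).add ((hy₁ t₀).mul (hz₂ t₀))).const_mul a |>.add
      (((hy₂ t₀).mul (hz₂ t₀)).const_mul (2 * b)) |>.add
      (((hy₁ t₀).mul (hz₁ t₀)).const_mul (2 * c))).congr_deriv (by ring)
  have hF1 := hF.deriv
  rw [funext fun t => (hF' t).deriv, deriv_zero] at hF1
  have hF2 := hF1.deriv_eq
  rw [hF''.deriv, deriv_zero] at hF2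
  have hF0 := hF.eq_of_nhds
  simp only [Pi.zero_apply] at hF0 hF2
  refine binary_quadratic_eq_zero hW hF0 hF1.eq_of_nhds ?_
  linear_combination hF2 / 2 - q t₀ * hF0

theorem hill_weighted_products_coeffs_eq_zero {U : Set ℝ} (hU : IsOpen U) {g : ℝ → ℝ}
    (hg : Continuous g) {t₀ : ℝ} (ht₀ : t₀ ∈ U) (hgt₀ : g t₀ ≠ 0)
    (hW : y₁ t₀ * z₂ t₀ - y₂ t₀ * z₁ t₀ ≠ 0) (k : Fin 3 → ℝ)
    (hk : ∀ t ∈ U, ∑ i, k i * (g t * ![y₁ t * y₂ t, y₂ t ^ 2, y₁ t ^ 2] i) = 0) : k = 0 := by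
  have hnhds : U ∩ {t | g t ≠ 0} ∈ 𝓝 t₀ :=
    (hU.inter (isOpen_ne_fun hg continuous_const)).mem_nhds ⟨ht₀, hgt₀⟩
  obtain ⟨h0, h1, h2⟩ := hill_products_coeffs_eq_zero hy₁ hy₂ hz₁ hz₂ hW
    (a := k 0) (b := k 1) (c := k 2) (Filter.mem_of_superset hnhds fun t ⟨ht, hgt⟩ => by
      have hgF := hk t ht
      simp only [Fin.sum_univ_three, cons_val] at hgF
      refine (mul_eq_zero.mp ?_).resolve_left hgt
      linear_combination hgF)
  ext i
  fin_cases i <;> assumption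

end Hill

theorem exists_moments_eq {ι : Type*} [Fintype ι] [DecidableEq ι] {a b : ℝ} (hab : a < b)
    {h : ι → ℝ → ℝ} (hh : ∀ i, Continuous (h i)) {φ : ℝ → ℝ} (hφ : Continuous φ)
    (hφpos : ∀ t ∈ Ioo a b, 0 < φ t)
    (hind : ∀ c : ι → ℝ, (∀ t ∈ Ioo a b, ∑ i, c i * h i t = 0) → c = 0) (m : ι → ℝ) :
    ∃ c : ι → ℝ, ∀ i, ∫ t in a..b, h i t * (φ t * ∑ j, c j * h j t) = m i := by
  have hS : ∀ c : ι → ℝ, Continuous fun t => ∑ j, c j * h j t := fun c =>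
    continuous_finsetSum _ fun j _ => continuous_const.mul (hh j)
  have hmoment : ∀ (c : ι → ℝ) {F : ℝ → ℝ}, Continuous F →
      ∫ t in a..b, (∑ j, c j * h j t) * F t = ∑ j, c j * ∫ t in a..b, h j t * F t := by
    intro c F hF
    simp only [Finset.sum_mul, ← intervalIntegral.integral_const_mul, mul_assoc]
    exact intervalIntegral.integral_finsetSum fun j _ =>
      (continuous_const.mul ((hh j).mul hF)).intervalIntegrable _ _
  set G : Matrix ι ι ℝ := Matrix.of fun i j => ∫ t in a..b, h j t * (φ t * h i t)
  have hG : ∀ c i, (G *ᵥ c) i = ∫ t in a..b, h i t * (φ t * ∑ j, c j * h j t) := by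
    intro c i
    have hcomm : ∫ t in a..b, h i t * (φ t * ∑ j, c j * h j t)
        = ∫ t in a..b, (∑ j, c j * h j t) * (φ t * h i t) :=
      intervalIntegral.integral_congr fun t _ => by ring
    rw [hcomm, hmoment c (F := fun t => φ t * h i t) (hφ.mul (hh i))]
    simp only [G, mulVec, dotProduct, of_apply, mul_comm]
  have hφnonneg : ∀ t ∈ Icc a b, 0 ≤ φ t := by
    rw [← closure_Ioo hab.ne]
    exact closure_minimal (fun t ht => (hφpos t ht).le) (isClosed_le continuous_const hφ)
  have hker : ∀ c, G *ᵥ c = 0 → c = 0 := by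
    intro c hc
    refine hind c fun s hs => ?_
    by_contra hne
    have hpos : 0 < ∫ t in a..b, (∑ j, c j * h j t) * (φ t * ∑ j, c j * h j t) := by
      refine intervalIntegral.integral_pos hab ((hS c).mul (hφ.mul (hS c))).continuousOn
        (fun t ht => ?_) ⟨s, Ioo_subset_Icc_self hs, ?_⟩
      · rw [mul_left_comm]
        exact mul_nonneg (hφnonneg t (Ioc_subset_Icc_self ht)) (mul_self_nonneg _)
      · rw [mul_left_comm]
        exact mul_pos (hφpos s hs) (mul_self_pos.mpr hne)
    rw [hmoment c (F := fun t => φ t * ∑ j, c j * h j t) (hφ.mul (hS c))] at hpos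
    simp [← hG, hc] at hpos
  have hdet : G.det ≠ 0 := fun h0 => by
    obtain ⟨c, hc0, hGc⟩ := exists_mulVec_eq_zero_iff.mpr h0
    exact hc0 (hker c hGc)
  obtain ⟨c, hc⟩ := mulVec_surjective_iff_isUnit.mpr
    (G.isUnit_iff_isUnit_det.mpr (isUnit_iff_ne_zero.mpr hdet)) m
  exact ⟨c, fun i => (hG c i).symm.trans (congrFun hc i)⟩

theorem exists_periodic_eqOn_Icc {c : ℝ} (hc : 0 < c) {w : ℝ → ℝ}
    (hw : ContinuousOn w (Icc 0 c)) (hwc : w 0 = w c) :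
    ∃ v : ℝ → ℝ, Continuous v ∧ Function.Periodic v c ∧ EqOn v w (Icc 0 c) := by
  have : Fact (0 < c) := ⟨hc⟩
  refine ⟨fun t => AddCircle.liftIco c 0 w t,
    (AddCircle.liftIco_continuous (by rwa [zero_add]) (by rwa [zero_add])).comp
      (AddCircle.continuous_mk' c),
    fun t => by simp, fun t ht => ?_⟩
  rcases ht.2.lt_or_eq with hlt | rfl
  · exact AddCircle.liftIco_coe_apply (by rw [zero_add]; exact ⟨ht.1, hlt⟩)
  · rw [← hwc]
    dsimp only
    rw [AddCircle.coe_period]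
    exact AddCircle.liftIco_coe_apply (by simpa using hc)

theorem exists_periodic_moments_eq {ι : Type*} [Fintype ι] [DecidableEq ι] {c : ℝ} (hc : 0 < c)
    {h : ι → ℝ → ℝ} (hh : ∀ i, Continuous (h i))
    (hind : ∀ k : ι → ℝ, (∀ t ∈ Ioo 0 c, ∑ i, k i * h i t = 0) → k = 0) (m : ι → ℝ) :
    ∃ v : ℝ → ℝ, Continuous v ∧ Function.Periodic v c ∧ ∀ i, ∫ t in 0..c, h i t * v t = m i := by
  set φ : ℝ → ℝ := fun t => sin (π * t / c) ^ 2
  have hφ : Continuous φ := by fun_prop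
  have hφpos : ∀ t ∈ Ioo 0 c, 0 < φ t := fun t ht =>
    pow_pos (sin_pos_of_pos_of_lt_pi (by have := ht.1; positivity)
      (by rw [div_lt_iff₀ hc]; nlinarith [ht.2, pi_pos])) 2
  obtain ⟨k, hk⟩ := exists_moments_eq hc hh hφ hφpos hind m
  obtain ⟨v, hvc, hvper, hv⟩ := exists_periodic_eqOn_Icc hc (w := fun t => φ t * ∑ j, k j * h j t)
    (by fun_prop) (by simp [φ, hc.ne'])
  refine ⟨v, hvc, hvper, fun i => ?_⟩
  rw [← hk i]
  exact intervalIntegral.integral_congr fun t ht => by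
    rw [uIcc_of_le hc.le] at ht
    simp only [hv ht]

theorem conj_N0_eq {P : Matrix (Fin 2) (Fin 2) ℝ} (hP : P.det = 1) :
    P⁻¹ * N0 * P = !![-(P 0 0 * P 0 1), -P 0 1 ^ 2; P 0 0 ^ 2, P 0 0 * P 0 1] := by
  rw [inv_def, hP, adjugate_fin_two, N0, eta_fin_two P]
  ext i j
  fin_cases i <;> fin_cases j <;> simp [Matrix.mul_apply, Fin.sum_univ_two] <;> ring

theorem of_integral_conj_N0 {Φ : ℝ → Matrix (Fin 2) (Fin 2) ℝ} (hΦ : ∀ t, (Φ t).det = 1)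
    (g v : ℝ → ℝ) (a b : ℝ) :
    Matrix.of (fun i j => ∫ t in a..b, g t * v t * ((Φ t)⁻¹ * N0 * Φ t) i j) =
      !![-∫ t in a..b, g t * (Φ t 0 0 * Φ t 0 1) * v t, -∫ t in a..b, g t * Φ t 0 1 ^ 2 * v t;
        ∫ t in a..b, g t * Φ t 0 0 ^ 2 * v t, ∫ t in a..b, g t * (Φ t 0 0 * Φ t 0 1) * v t] := by
  simp only [conj_N0_eq (hΦ _)]
  ext i j
  fin_cases i <;> fin_cases j <;> simp [← intervalIntegral.integral_neg, mul_right_comm]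

theorem image_eq_traceless_mul {R α : Type*} [CommRing R] {S : Set α} (P : Matrix (Fin 2) (Fin 2) R)
    (m : α → Fin 3 → R) (hm : ∀ x, ∃ v ∈ S, m v = x) :
    (fun v => P * !![-m v 0, -m v 1; m v 2, m v 0]) '' S =
      {X | ∃ M : Matrix (Fin 2) (Fin 2) R, M.trace = 0 ∧ X = P * M} := by
  ext X
  constructor
  · rintro ⟨v, -, rfl⟩
    exact ⟨_, by simp [trace_fin_two], rfl⟩
  · rintro ⟨M, hM, rfl⟩
    obtain ⟨v, hv, hmv⟩ := hm ![-M 0 0, -M 0 1, M 1 0]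
    refine ⟨v, hv, congrArg (P * ·) ?_⟩
    rw [trace_fin_two, add_eq_zero_iff_eq_neg] at hM
    ext i j
    fin_cases i <;> fin_cases j <;> simp [hmv, hM]

theorem hasDerivAt_fundamental_col {q : ℝ → ℝ} {Φ : ℝ → Matrix (Fin 2) (Fin 2) ℝ}
    (hΦ : ∀ t : ℝ, ∀ i j, HasDerivAt (fun s => Φ s i j) ((!![0, 1; q t, 0] * Φ t) i j) t)
    (j : Fin 2) :
    (∀ t, HasDerivAt (fun s => Φ s 0 j) (Φ t 1 j) t) ∧
      ∀ t, HasDerivAt (fun s => Φ s 1 j) (q t * Φ t 0 j) t :=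
  ⟨fun t => by simpa [Matrix.mul_apply] using hΦ t 0 j,
    fun t => by simpa [Matrix.mul_apply] using hΦ t 1 j⟩

/-- Proposition 3.1(b), first case. For smooth `f` with `f'` nowhere
flat and `u` continuous `2π`-periodic, nonconstant or constant with `f''(u(0)) ≠ 0`,
the derivative of the nonlinear monodromy,
`v ↦ Φ(2π)·∫₀^{2π} f''(u(t))·v(t)·Φ(t)⁻¹·N₀·Φ(t) dt`, on continuous `2π`-periodic `v`,
has range exactly `{Φ(2π)·M : tr M = 0}`. -/
theorem stmt_7 (f : ℝ → ℝ) (hf : ContDiff ℝ (⊤ : ℕ∞) f) (hnf : NowhereFlat (deriv f))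
    (u : ℝ → ℝ) (hu : Continuous u) (huper : Function.Periodic u (2 * π))
    (hcase : (¬ ∃ c : ℝ, u = fun _ => c) ∨
      (∃ c : ℝ, (u = fun _ => c) ∧ deriv (deriv f) c ≠ 0))
    -- `Φ` is the fundamental matrix of the potential `f' ∘ u`:
    (Φ : ℝ → Matrix (Fin 2) (Fin 2) ℝ)
    (hΦ0 : Φ 0 = 1)
    (hΦ : ∀ t : ℝ, ∀ i j, HasDerivAt (fun s => Φ s i j)
      ((!![0, 1; deriv f (u t), 0] * Φ t) i j) t) :
    (fun v : ℝ → ℝ => Φ (2 * π) *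
        Matrix.of (fun i j : Fin 2 =>
          ∫ t in (0:ℝ)..(2 * π),
            deriv (deriv f) (u t) * v t * (((Φ t)⁻¹ * N0 * Φ t) i j))) ''
      {v : ℝ → ℝ | Continuous v ∧ Function.Periodic v (2 * π)} =
    {X : Matrix (Fin 2) (Fin 2) ℝ |
      ∃ M : Matrix (Fin 2) (Fin 2) ℝ, M.trace = 0 ∧ X = Φ (2 * π) * M} := by
  obtain ⟨hy₁, hz₁⟩ := hasDerivAt_fundamental_col hΦ 0
  obtain ⟨hy₂, hz₂⟩ := hasDerivAt_fundamental_col hΦ 1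
  have hdet : ∀ t, (Φ t).det = 1 := fun t => by
    rw [det_fin_two, hill_wronskian_eq hy₁ hy₂ hz₁ hz₂ 0 t, hΦ0]
    simp
  have hΦc : Continuous Φ := continuous_pi fun i => continuous_pi fun j =>
    continuous_iff_continuousAt.2 fun t => (hΦ t i j).continuousAt
  have hg : Continuous fun t => deriv (deriv f) (u t) := (hf.iterate_deriv 2).continuous.comp hu
  obtain ⟨t₀, ht₀, hgt₀⟩ : ∃ t ∈ Ioo 0 (2 * π), deriv (deriv f) (u t) ≠ 0 := by
    obtain ⟨t, ht⟩ := exists_deriv_comp_ne_zero hnf hu hcase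
    exact Function.Periodic.exists_mem_Ioo_ne_zero hg (fun t => by simp [huper t]) two_pi_pos ht
  have hind := hill_weighted_products_coeffs_eq_zero hy₁ hy₂ hz₁ hz₂ isOpen_Ioo hg ht₀ hgt₀
    (by simpa [det_fin_two] using (hdet t₀).trans_ne one_ne_zero)
  have hmom : ∀ x : Fin 3 → ℝ, ∃ v ∈ {v : ℝ → ℝ | Continuous v ∧ Function.Periodic v (2 * π)},
      (fun i => ∫ t in 0..2 * π, deriv (deriv f) (u t) *
        ![Φ t 0 0 * Φ t 0 1, Φ t 0 1 ^ 2, Φ t 0 0 ^ 2] i * v t) = x := fun x => by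
    obtain ⟨v, hvc, hvp, hv⟩ := exists_periodic_moments_eq two_pi_pos
      (fun i => by fin_cases i <;> simp <;> fun_prop) hind x
    exact ⟨v, ⟨hvc, hvp⟩, funext hv⟩
  simp only [of_integral_conj_N0 hdet]
  simpa only [cons_val] using image_eq_traceless_mul (Φ (2 * π)) _ hmom
end
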